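/- arXiv:2302.08773 — 11 statements merged into one kernel-verified Lean document; each statement's English description precedes it below -/
import Mathlib

section
/- Let n, m be natural numbers, p ∈ ℂⁿ and z ∈ ℂᵐ, and let r₀ ∈ ℝ satisfy r₀ ≥ Re(pᵢ) for all i and r₀ ≥ Re(zⱼ) for all j. Then the following are equivalent: (i) for every integer k ≥ 1 and every real s > r₀, Re(∑_{i=1}^n (s - pᵢ)^{-k}) ≥ Re(∑_{j=1}^m (s - zⱼ)^{-k}); (ii) for every real t ≥ 0, Re(∑_{i=1}^n exp(pᵢ t)) ≥ Re(∑_{j=1}^m exp(zⱼ t)). (This is the analytic core of Lemma 1: condition (i) expresses that (-1)^k[log H(s)]^{(k)} ≥ 0 for all k ≥ 1 and s > r₀, where H(s) = K∏(s - zⱼ)/∏(s - pᵢ) with K > 0.) -/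
open MeasureTheory Set Filter Topology Nat

/- ### Auxiliary limit: `((1 - w/k)⁻¹)^k → exp w` -/

private lemma lim1 (w : ℂ) :
    Tendsto (fun k : ℕ => ((1 - w / k)⁻¹) ^ k) atTop (𝓝 (Complex.exp w)) := by
  rcases eq_or_ne w 0 with rfl | hw
  · simpa using tendsto_const_nhds
  have h0 : Tendsto (fun k : ℕ => w / k) atTop (𝓝 0) := by
    have h : Tendsto (fun k : ℕ => (((k : ℝ)⁻¹ : ℝ) : ℂ)) atTop (𝓝 ((0:ℝ):ℂ)) :=
      (Complex.continuous_ofReal.tendsto _).comp tendsto_inv_atTop_nhds_zero_nat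
    have h2 := h.const_mul w
    simp only [Complex.ofReal_zero, mul_zero] at h2
    refine h2.congr fun k => ?_
    push_cast
    ring
  have h1 : Tendsto (fun k : ℕ => 1 - w / k) atTop (𝓝 1) := by
    simpa using (tendsto_const_nhds (x := (1:ℂ))).sub h0
  have hlog : HasDerivAt Complex.log 1 1 := by
    simpa using Complex.hasDerivAt_log Complex.one_mem_slitPlane
  have hslope := hasDerivAt_iff_tendsto_slope.mp hlog
  have hne : ∀ᶠ k : ℕ in atTop, 1 - w / k ≠ 1 := by
    filter_upwards [eventually_ge_atTop 1] with k hk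
    have hk0 : (k : ℂ) ≠ 0 := Nat.cast_ne_zero.mpr (by omega)
    simp [div_eq_zero_iff, sub_eq_self, hw, hk0]
  have h1' : Tendsto (fun k : ℕ => 1 - w / k) atTop (𝓝[≠] 1) :=
    tendsto_nhdsWithin_of_tendsto_nhds_of_eventually_within _ h1 hne
  have h4 : Tendsto (fun k : ℕ => slope Complex.log 1 (1 - w / k)) atTop (𝓝 1) := by
    exact hslope.comp h1'
  have h5 : Tendsto (fun k : ℕ => (k : ℂ) * Complex.log (1 - w / k)) atTop (𝓝 (-w)) := by
    have := h4.const_mul (-w)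
    rw [mul_one] at this
    refine this.congr' ?_
    filter_upwards [eventually_ge_atTop 1] with k hk
    have hk0 : (k : ℂ) ≠ 0 := Nat.cast_ne_zero.mpr (by omega)
    rw [slope_def_field, Complex.log_one, sub_zero, sub_sub_cancel_left]
    field_simp
  have h6 : Tendsto (fun k : ℕ => Complex.exp (-((k : ℂ) * Complex.log (1 - w / k))))
      atTop (𝓝 (Complex.exp w)) := by
    have := (Complex.continuous_exp.tendsto (-(-w))).comp h5.neg
    rw [neg_neg] at this
    exact this
  refine h6.congr' ?_
  filter_upwards [h1.eventually_ne one_ne_zero] with k hk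
  rw [Complex.exp_neg, Complex.exp_nat_mul, Complex.exp_log hk, inv_pow]

/- ### Laplace-type integrals with complex rate -/

private lemma int_real (n : ℕ) {b : ℝ} (hb : 0 < b) :
    IntegrableOn (fun t : ℝ => t ^ n * Real.exp (-b * t)) (Ioi 0) := by
  have h := integrableOn_rpow_mul_exp_neg_mul_rpow (s := (n : ℝ)) (p := 1)
    (by linarith [Nat.cast_nonneg (α := ℝ) n]) zero_lt_one hb
  refine h.congr_fun (fun x hx => ?_) measurableSet_Ioi
  beta_reduce
  rw [Real.rpow_natCast, Real.rpow_one]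

private lemma int_cx (n : ℕ) {c : ℂ} (hc : 0 < c.re) :
    IntegrableOn (fun t : ℝ => (t : ℂ) ^ n * Complex.exp (-(c * t))) (Ioi 0) := by
  refine Integrable.mono' (int_real n hc) ?_ ?_
  · exact (Continuous.mul (by fun_prop) (by fun_prop)).aestronglyMeasurable
  · refine (ae_restrict_iff' measurableSet_Ioi).mpr (ae_of_all _ fun t ht => ?_)
    have ht0 : 0 < t := ht
    rw [norm_mul, norm_pow, Complex.norm_exp,
      Complex.norm_real, Real.norm_eq_abs, abs_of_pos ht0]
    have hre : (-(c * (t : ℂ))).re = -c.re * t := by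
      simp [Complex.mul_re]
    rw [hre]

private lemma tendsto_pow_exp_zero (n : ℕ) {b : ℝ} (hb : 0 < b) :
    Tendsto (fun t : ℝ => t ^ n * Real.exp (-b * t)) atTop (𝓝 0) := by
  have h := Real.tendsto_pow_mul_exp_neg_atTop_nhds_zero n
  have hcomp := h.comp (tendsto_id.const_mul_atTop hb)
  have := hcomp.const_mul (b ^ n)⁻¹
  rw [mul_zero] at this
  refine this.congr fun t => ?_
  simp only [Function.comp_apply, id]
  field_simp
  ring

private lemma tendsto_cexp_zero {c : ℂ} (hc : 0 < c.re) :
    Tendsto (fun t : ℝ => Complex.exp (-(c * t))) atTop (𝓝 0) := by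
  rw [tendsto_zero_iff_norm_tendsto_zero]
  have h : Tendsto (fun t : ℝ => Real.exp (-c.re * t)) atTop (𝓝 0) := by
    refine Real.tendsto_exp_atBot.comp ?_
    exact tendsto_id.const_mul_atTop_of_neg (by linarith)
  refine h.congr fun t => ?_
  rw [Complex.norm_exp]
  congr 1
  simp [Complex.mul_re]

private lemma integral_pow_exp (n : ℕ) {c : ℂ} (hc : 0 < c.re) :
    ∫ t in Ioi (0:ℝ), (t : ℂ) ^ n * Complex.exp (-(c * t)) = n ! / c ^ (n + 1) := by
  have hc0 : c ≠ 0 := fun h => by simp [h] at hc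
  have hmul : ∀ x : ℝ, HasDerivAt (fun t : ℝ => -(c * (t : ℂ))) (-c) x := by
    intro x
    have h := ((Complex.ofRealCLM.hasDerivAt (x := x)).const_mul c).neg
    simp only [Complex.ofRealCLM_apply, Complex.ofReal_one, mul_one] at h
    exact h
  induction n with
  | zero =>
    have hd : ∀ x ∈ Ici (0:ℝ), HasDerivAt (fun t : ℝ => -Complex.exp (-(c * t)) / c)
        ((x : ℂ) ^ 0 * Complex.exp (-(c * x))) x := by
      intro x _
      have h2 := ((hmul x).cexp).neg.div_const c
      refine h2.congr_deriv ?_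
      simp [hc0]
    have hint := int_cx 0 hc
    have hten : Tendsto (fun t : ℝ => -Complex.exp (-(c * t)) / c) atTop (𝓝 0) := by
      have := (tendsto_cexp_zero hc).neg.div_const c
      simpa using this
    have := integral_Ioi_of_hasDerivAt_of_tendsto' hd hint hten
    rw [this]
    simp only [Nat.factorial_zero, Nat.cast_one, pow_one, Complex.ofReal_zero, mul_zero, neg_zero,
      Complex.exp_zero]
    field_simp
    ring
  | succ n ih =>
    set f' : ℝ → ℂ := fun x =>
      ((n : ℂ) + 1) * ((x : ℂ) ^ n * Complex.exp (-(c * x)))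
        - c * ((x : ℂ) ^ (n + 1) * Complex.exp (-(c * x))) with hf'
    have hd : ∀ x ∈ Ici (0:ℝ),
        HasDerivAt (fun t : ℝ => (t : ℂ) ^ (n + 1) * Complex.exp (-(c * t))) (f' x) x := by
      intro x _
      have hpow : HasDerivAt (fun t : ℝ => (t : ℂ) ^ (n + 1))
          (((n : ℂ) + 1) * (x : ℂ) ^ n) x := by
        have := (hasDerivAt_pow (n + 1) ((x : ℝ) : ℂ)).comp_ofReal
        simpa using this
      have := hpow.mul ((hmul x).cexp)
      refine this.congr_deriv ?_
      simp only [hf']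
      ring
    have hint : IntegrableOn f' (Ioi (0:ℝ)) :=
      ((int_cx n hc).const_mul _).sub ((int_cx (n + 1) hc).const_mul c)
    have hten : Tendsto (fun t : ℝ => (t : ℂ) ^ (n + 1) * Complex.exp (-(c * t)))
        atTop (𝓝 0) := by
      refine squeeze_zero_norm' ?_ (tendsto_pow_exp_zero (n + 1) hc)
      filter_upwards [eventually_gt_atTop (0:ℝ)] with t ht
      rw [norm_mul, norm_pow, Complex.norm_exp,
        Complex.norm_real, Real.norm_eq_abs, abs_of_pos ht]
      refine le_of_eq ?_
      congr 2
      simp [Complex.mul_re]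
    have key := integral_Ioi_of_hasDerivAt_of_tendsto' hd hint hten
    have hsplit : ∫ x in Ioi (0:ℝ), f' x =
        ((n : ℂ) + 1) * (∫ x in Ioi (0:ℝ), (x : ℂ) ^ n * Complex.exp (-(c * x)))
          - c * ∫ x in Ioi (0:ℝ), (x : ℂ) ^ (n + 1) * Complex.exp (-(c * x)) := by
      rw [integral_sub ((int_cx n hc).const_mul _) ((int_cx (n + 1) hc).const_mul c),
        integral_const_mul, integral_const_mul]
    rw [hsplit, ih] at key
    have key0 : ((n : ℂ) + 1) * (((n)! : ℂ) / c ^ (n + 1))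
        - c * ∫ x in Ioi (0:ℝ), (x : ℂ) ^ (n + 1) * Complex.exp (-(c * x)) = 0 := by
      rw [key]; simp
    have hI : c * ∫ x in Ioi (0:ℝ), (x : ℂ) ^ (n + 1) * Complex.exp (-(c * x)) =
        ((n : ℂ) + 1) * (((n)! : ℂ) / c ^ (n + 1)) := by linear_combination -key0
    refine mul_left_cancel₀ hc0 ?_
    rw [hI, Nat.factorial_succ]
    push_cast
    field_simp
    ring

/-- analytic core of Lemma 1.
For poles `p ∈ ℂⁿ`, zeros `z ∈ ℂᵐ`, and `r₀` bounding all real parts, the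
derivative-sign condition (i) is equivalent to the exponential-sum condition (ii). -/
theorem stmt_0 (n m : ℕ) (p : Fin n → ℂ) (z : Fin m → ℂ) (r₀ : ℝ)
    (hp : ∀ i, (p i).re ≤ r₀) (hz : ∀ j, (z j).re ≤ r₀) :
    (∀ k : ℕ, 1 ≤ k → ∀ s : ℝ, r₀ < s →
        (∑ j, (((s : ℂ) - z j)⁻¹) ^ k).re ≤ (∑ i, (((s : ℂ) - p i)⁻¹) ^ k).re) ↔
    (∀ t : ℝ, 0 ≤ t →
        (∑ j, Complex.exp (z j * t)).re ≤ (∑ i, Complex.exp (p i * t)).re) := by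
  constructor
  · -- (i) → (ii)
    intro hi t ht
    have main : ∀ t : ℝ, 0 < t →
        (∑ j, Complex.exp (z j * t)).re ≤ (∑ i, Complex.exp (p i * t)).re := by
      intro t htpos
      have ht0 : (t : ℝ) ≠ 0 := ne_of_gt htpos
      have hA : Tendsto (fun k : ℕ => (∑ i, ((1 - p i * t / k)⁻¹) ^ k).re) atTop
          (𝓝 ((∑ i, Complex.exp (p i * t)).re)) :=
        (Complex.continuous_re.tendsto _).comp
          (tendsto_finset_sum _ fun i _ => lim1 (p i * t))
      have hB : Tendsto (fun k : ℕ => (∑ j, ((1 - z j * t / k)⁻¹) ^ k).re) atTop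
          (𝓝 ((∑ j, Complex.exp (z j * t)).re)) :=
        (Complex.continuous_re.tendsto _).comp
          (tendsto_finset_sum _ fun j _ => lim1 (z j * t))
      refine le_of_tendsto_of_tendsto hB hA ?_
      filter_upwards [eventually_gt_atTop (⌈r₀ * t⌉₊), eventually_ge_atTop 1] with k hk1 hk2
      have hkpos : (0:ℝ) < k := by exact_mod_cast Nat.lt_of_lt_of_le Nat.zero_lt_one hk2
      set s : ℝ := (k : ℝ) / t with hs_def
      have hspos : 0 < s := div_pos hkpos htpos
      have hrs : r₀ < s := by
        rw [hs_def, lt_div_iff₀ htpos]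
        exact lt_of_le_of_lt (Nat.le_ceil _) (by exact_mod_cast hk1)
      have h := hi k hk2 s hrs
      have hfac : ∀ a : ℂ, a.re ≤ r₀ →
          ((1 - a * t / k)⁻¹) ^ k = ((s ^ k : ℝ) : ℂ) * (((s : ℂ) - a)⁻¹) ^ k := by
        intro a ha
        have hsa : ((s : ℂ) - a) ≠ 0 := by
          intro hval
          have := congrArg Complex.re hval
          simp only [Complex.sub_re, Complex.ofReal_re, Complex.zero_re] at this
          linarith
        have h2 : ((1 : ℂ) - a * t / k)⁻¹ = (s : ℂ) * ((s : ℂ) - a)⁻¹ := by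
          have hk0 : (k : ℂ) ≠ 0 := Nat.cast_ne_zero.mpr (by omega)
          have htC : (t : ℂ) ≠ 0 := Complex.ofReal_ne_zero.mpr ht0
          have hsC : (s : ℂ) = (k : ℂ) / (t : ℂ) := by
            rw [hs_def]; push_cast; ring
          rw [hsC] at hsa ⊢
          rw [← inv_inv ((k : ℂ) / t * ((k : ℂ) / t - a)⁻¹)]
          congr 1
          rw [mul_inv, inv_inv, inv_div]
          field_simp
        rw [h2, mul_pow]
        push_cast
        ring
      calc (∑ j, ((1 - z j * t / k)⁻¹) ^ k).re
          = s ^ k * (∑ j, (((s : ℂ) - z j)⁻¹) ^ k).re := by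
            rw [Finset.sum_congr rfl (fun j _ => hfac (z j) (hz j)), ← Finset.mul_sum,
              Complex.re_ofReal_mul]
        _ ≤ s ^ k * (∑ i, (((s : ℂ) - p i)⁻¹) ^ k).re :=
            mul_le_mul_of_nonneg_left h (by positivity)
        _ = (∑ i, ((1 - p i * t / k)⁻¹) ^ k).re := by
            rw [Finset.sum_congr rfl (fun i _ => hfac (p i) (hp i)), ← Finset.mul_sum,
              Complex.re_ofReal_mul]
    rcases ht.eq_or_lt with rfl | htpos
    · -- t = 0 by continuity
      have hcont : ∀ (N : ℕ) (q : Fin N → ℂ), Continuous fun u : ℝ =>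
          (∑ i, Complex.exp (q i * u)).re :=
        fun N q => Complex.continuous_re.comp (continuous_finset_sum _ fun i _ =>
          Complex.continuous_exp.comp (continuous_const.mul Complex.continuous_ofReal))
      have hBz : Tendsto (fun u : ℝ => (∑ j, Complex.exp (z j * u)).re) (𝓝[>] (0:ℝ))
          (𝓝 ((∑ j, Complex.exp (z j * (0:ℝ))).re)) :=
        ((hcont m z).tendsto 0).mono_left nhdsWithin_le_nhds
      have hBp : Tendsto (fun u : ℝ => (∑ i, Complex.exp (p i * u)).re) (𝓝[>] (0:ℝ))
          (𝓝 ((∑ i, Complex.exp (p i * (0:ℝ))).re)) :=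
        ((hcont n p).tendsto 0).mono_left nhdsWithin_le_nhds
      refine le_of_tendsto_of_tendsto hBz hBp ?_
      filter_upwards [self_mem_nhdsWithin] with u hu
      exact main u hu
    · exact main t htpos
  · -- (ii) → (i)
    intro hii k hk s hs
    obtain ⟨k', rfl⟩ : ∃ k', k = k' + 1 := ⟨k - 1, by omega⟩
    have hcre : ∀ a : ℂ, a.re ≤ r₀ → 0 < ((s : ℂ) - a).re := by
      intro a ha
      simp only [Complex.sub_re, Complex.ofReal_re]
      linarith
    have hrep : ∀ a : ℂ, a.re ≤ r₀ → (((s : ℂ) - a)⁻¹) ^ (k' + 1) =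
        ((k' ! : ℝ) : ℂ)⁻¹ * ∫ u in Ioi (0:ℝ), (u : ℂ) ^ k' *
          Complex.exp (-(((s : ℂ) - a) * u)) := by
      intro a ha
      rw [integral_pow_exp k' (hcre a ha)]
      have hfk : ((k' ! : ℝ) : ℂ) ≠ 0 := by
        exact_mod_cast Nat.cast_ne_zero.mpr (Nat.factorial_ne_zero k')
      have hc0 : ((s : ℂ) - a) ≠ 0 := fun hval => by
        have := hcre a ha; rw [hval] at this; simp at this
      have hfkC : ((k' ! : ℕ) : ℂ) ≠ 0 := Nat.cast_ne_zero.mpr k'.factorial_ne_zero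
      rw [inv_pow]
      push_cast
      field_simp
    set gp : ℝ → ℂ := fun u => ∑ i, (u : ℂ) ^ k' * Complex.exp (-(((s : ℂ) - p i) * u))
      with hgp
    set gz : ℝ → ℂ := fun u => ∑ j, (u : ℂ) ^ k' * Complex.exp (-(((s : ℂ) - z j) * u))
      with hgz
    have hgp_int : IntegrableOn gp (Ioi (0:ℝ)) :=
      integrable_finset_sum _ fun i _ => int_cx k' (hcre (p i) (hp i))
    have hgz_int : IntegrableOn gz (Ioi (0:ℝ)) :=
      integrable_finset_sum _ fun j _ => int_cx k' (hcre (z j) (hz j))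
    have heq : ∀ (N : ℕ) (q : Fin N → ℂ) (hq : ∀ i, (q i).re ≤ r₀),
        (∑ i, (((s : ℂ) - q i)⁻¹) ^ (k' + 1)).re =
          (k' ! : ℝ)⁻¹ * ∫ u in Ioi (0:ℝ),
            (∑ i, (u : ℂ) ^ k' * Complex.exp (-(((s : ℂ) - q i) * u))).re := by
      intro N q hq
      have hsum : (∑ i, (((s : ℂ) - q i)⁻¹) ^ (k' + 1)) =
          ((k' ! : ℝ) : ℂ)⁻¹ * ∫ u in Ioi (0:ℝ),
            (∑ i, (u : ℂ) ^ k' * Complex.exp (-(((s : ℂ) - q i) * u))) := by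
        rw [integral_finset_sum _ fun i _ => int_cx k' (hcre (q i) (hq i)),
          Finset.mul_sum]
        exact Finset.sum_congr rfl fun i _ => by
          rw [hrep (q i) (hq i)]
      rw [hsum, ← Complex.ofReal_inv, Complex.re_ofReal_mul]
      congr 1
      rw [← RCLike.re_to_complex, ← integral_re
        (integrable_finset_sum _ fun i _ => int_cx k' (hcre (q i) (hq i)))]
      rfl
    rw [heq m z hz, heq n p hp]
    refine mul_le_mul_of_nonneg_left ?_ (by positivity)
    refine setIntegral_mono_on ?_ ?_ measurableSet_Ioi ?_
    · exact hgz_int.re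
    · exact hgp_int.re
    · intro u hu
      have hupos : 0 < u := hu
      have hfac2 : ∀ a : ℂ, (u : ℂ) ^ k' * Complex.exp (-(((s : ℂ) - a) * u)) =
          ((u ^ k' * Real.exp (-s * u) : ℝ) : ℂ) * Complex.exp (a * u) := by
        intro a
        have harg : -(((s : ℂ) - a) * u) = (((-s * u : ℝ)) : ℂ) + a * u := by
          push_cast; ring
        rw [harg, Complex.exp_add, ← Complex.ofReal_exp]
        push_cast
        ring
      simp only [Finset.sum_congr rfl fun j (_ : j ∈ Finset.univ) => hfac2 (z j),
        Finset.sum_congr rfl fun i (_ : i ∈ Finset.univ) => hfac2 (p i)]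
      rw [← Finset.mul_sum, ← Finset.mul_sum, Complex.re_ofReal_mul, Complex.re_ofReal_mul]
      exact mul_le_mul_of_nonneg_left (hii u hupos.le) (by positivity)
end

section
/- Let z ∈ ℝᵐ, p ∈ ℝⁿ, K > 0, and define H : ℝ → ℝ by H(s) = K ∏_{j=1}^m (s - zⱼ) / ∏_{i=1}^n (s - pᵢ). Let r₀ = max over all the numbers pᵢ and zⱼ. Then the following are equivalent: (i) for every real s > r₀ one has H(s) > 0 and, for every integer k ≥ 1, (-1)^k · (the k-th derivative of s ↦ log H(s) at s) ≥ 0; (ii) for every real t ≥ 0, ∑_{i=1}^n exp(pᵢ t) ≥ ∑_{j=1}^m exp(zⱼ t). -/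
open Real Filter MeasureTheory Set


/-- derivative of `u ↦ log (u - a)` at `x > a`. -/
lemma hasDerivAt_log_sub (a x : ℝ) (hx : a < x) :
    HasDerivAt (fun u : ℝ => Real.log (u - a)) ((x - a)⁻¹) x := by
  have h1 : HasDerivAt (fun u : ℝ => u - a) 1 x := (hasDerivAt_id x).sub_const a
  simpa [Function.comp_def] using (Real.hasDerivAt_log (by linarith : x - a ≠ 0)).comp x h1

/-- derivative of `u ↦ ((u - a)^(k+1))⁻¹` at `x > a`. -/
lemma hasDerivAt_inv_pow_sub (a x : ℝ) (hx : a < x) (k : ℕ) :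
    HasDerivAt (fun u : ℝ => ((u - a) ^ (k+1))⁻¹)
      (-(k+1) * ((x - a) ^ (k+2))⁻¹) x := by
  have hne : x - a ≠ 0 := by linarith
  have h1 : HasDerivAt (fun u : ℝ => u - a) 1 x := (hasDerivAt_id x).sub_const a
  have h2 : HasDerivAt (fun u : ℝ => (u - a) ^ (k+1))
      ((k+1) * (x - a) ^ k * 1) x := by
    have := h1.pow (k+1)
    norm_num at this ⊢
    exact this
  have h3 := h2.inv (pow_ne_zero (k+1) hne)
  refine h3.congr_deriv ?_
  field_simp
  ring

lemma log_H_eq (n m : ℕ) (p : Fin n → ℝ) (z : Fin m → ℝ) (K : ℝ) (hK : 0 < K)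
    (H : ℝ → ℝ) (hH : ∀ s, H s = K * (∏ j, (s - z j)) / ∏ i, (s - p i))
    (r₀ : ℝ) (hp : ∀ i, p i ≤ r₀) (hz : ∀ j, z j ≤ r₀)
    {u : ℝ} (hu : r₀ < u) :
    Real.log (H u)
      = Real.log K + (∑ j, Real.log (u - z j)) - ∑ i, Real.log (u - p i) := by
  have hzpos : ∀ j, 0 < u - z j := fun j => by have := hz j; linarith
  have hppos : ∀ i, 0 < u - p i := fun i => by have := hp i; linarith
  have h1 : 0 < ∏ j, (u - z j) := Finset.prod_pos (fun j _ => hzpos j)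
  have h2 : 0 < ∏ i, (u - p i) := Finset.prod_pos (fun i _ => hppos i)
  rw [hH u, Real.log_div (by positivity) (ne_of_gt h2),
    Real.log_mul (ne_of_gt hK) (ne_of_gt h1),
    Real.log_prod (fun j _ => ne_of_gt (hzpos j)),
    Real.log_prod (fun i _ => ne_of_gt (hppos i))]

lemma key_formula (n m : ℕ) (p : Fin n → ℝ) (z : Fin m → ℝ) (K : ℝ) (hK : 0 < K)
    (H : ℝ → ℝ) (hH : ∀ s, H s = K * (∏ j, (s - z j)) / ∏ i, (s - p i))
    (r₀ : ℝ) (hp : ∀ i, p i ≤ r₀) (hz : ∀ j, z j ≤ r₀) :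
    ∀ k : ℕ, ∀ s : ℝ, r₀ < s →
      iteratedDeriv (k+1) (fun u => Real.log (H u)) s
        = (-1)^k * (k.factorial : ℝ) *
            ((∑ j, ((s - z j)^(k+1))⁻¹) - ∑ i, ((s - p i)^(k+1))⁻¹) := by
  intro k
  induction k with
  | zero =>
    intro s hs
    have hev : (fun u => Real.log (H u)) =ᶠ[nhds s]
        (fun u => Real.log K + (∑ j, Real.log (u - z j)) - ∑ i, Real.log (u - p i)) := by
      filter_upwards [Ioi_mem_nhds hs] with u hu
      exact log_H_eq n m p z K hK H hH r₀ hp hz hu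
    rw [iteratedDeriv_one, hev.deriv_eq]
    have hd : HasDerivAt
        (fun u => Real.log K + (∑ j, Real.log (u - z j)) - ∑ i, Real.log (u - p i))
        ((∑ j, (s - z j)⁻¹) - ∑ i, (s - p i)⁻¹) s := by
      refine HasDerivAt.sub (HasDerivAt.const_add _ ?_) ?_
      · exact HasDerivAt.fun_sum (fun j _ => hasDerivAt_log_sub (z j) s (lt_of_le_of_lt (hz j) hs))
      · exact HasDerivAt.fun_sum (fun i _ => hasDerivAt_log_sub (p i) s (lt_of_le_of_lt (hp i) hs))
    rw [hd.deriv]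
    simp [pow_one]
  | succ k ih =>
    intro s hs
    have hev : iteratedDeriv (k+1) (fun u => Real.log (H u)) =ᶠ[nhds s]
        (fun u => (-1)^k * (k.factorial : ℝ) *
          ((∑ j, ((u - z j)^(k+1))⁻¹) - ∑ i, ((u - p i)^(k+1))⁻¹)) := by
      filter_upwards [Ioi_mem_nhds hs] with u hu
      exact ih u hu
    rw [iteratedDeriv_succ, hev.deriv_eq]
    have hd : HasDerivAt
        (fun u => (-1:ℝ)^k * (k.factorial : ℝ) *
          ((∑ j, ((u - z j)^(k+1))⁻¹) - ∑ i, ((u - p i)^(k+1))⁻¹))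
        ((-1)^k * (k.factorial : ℝ) *
          ((∑ j, -(k+1 : ℝ) * ((s - z j)^(k+2))⁻¹) - ∑ i, -(k+1 : ℝ) * ((s - p i)^(k+2))⁻¹)) s := by
      refine HasDerivAt.const_mul _ (HasDerivAt.sub ?_ ?_)
      · exact HasDerivAt.fun_sum (fun j _ => hasDerivAt_inv_pow_sub (z j) s (lt_of_le_of_lt (hz j) hs) k)
      · exact HasDerivAt.fun_sum (fun i _ => hasDerivAt_inv_pow_sub (p i) s (lt_of_le_of_lt (hp i) hs) k)
    rw [hd.deriv]
    simp only [Finset.sum_neg_distrib, ← Finset.mul_sum, Nat.factorial_succ]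
    push_cast
    ring

lemma eval_integral (k : ℕ) {c : ℝ} (hc : 0 < c) :
    ∫ t in Ioi (0:ℝ), t ^ (k:ℝ) * Real.exp (-(c * t)) = ((c ^ (k+1))⁻¹) * k.factorial := by
  have h := Real.integral_rpow_mul_exp_neg_mul_Ioi
    (show (0:ℝ) < (k:ℝ) + 1 by positivity) hc
  have h1 : ((k:ℝ) + 1) - 1 = (k:ℝ) := by ring
  rw [h1] at h
  rw [h, Real.Gamma_nat_eq_factorial]
  congr 1
  rw [show ((k:ℝ)+1) = ((k+1 : ℕ) : ℝ) by push_cast; ring, Real.rpow_natCast]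
  rw [one_div, inv_pow]

lemma integrable_aux (k : ℕ) {c : ℝ} (hc : 0 < c) :
    IntegrableOn (fun t : ℝ => t ^ (k:ℝ) * Real.exp (-(c * t))) (Ioi 0) := by
  have := integrableOn_rpow_mul_exp_neg_mul_rpow
    (show (-1:ℝ) < (k:ℝ) by exact_mod_cast neg_one_lt_zero.trans_le k.cast_nonneg) zero_lt_one hc
  simpa only [Real.rpow_one, neg_mul] using this

lemma C_of_RHS (n m : ℕ) (p : Fin n → ℝ) (z : Fin m → ℝ)
    (hRHS : ∀ t : ℝ, 0 ≤ t → ∑ j, Real.exp (z j * t) ≤ ∑ i, Real.exp (p i * t))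
    (k : ℕ) (s : ℝ) (hps : ∀ i, p i < s) (hzs : ∀ j, z j < s) :
    ∑ j, ((s - z j)^(k+1))⁻¹ ≤ ∑ i, ((s - p i)^(k+1))⁻¹ := by
  set F : ℝ → ℝ → ℝ := fun a t => t ^ (k:ℝ) * Real.exp (-((s - a) * t)) with hF
  have hint : ∀ a : ℝ, a < s → IntegrableOn (F a) (Ioi 0) :=
    fun a ha => integrable_aux k (by linarith)
  have hintz : ∫ t in Ioi (0:ℝ), ∑ j, F (z j) t = ∑ j, ((s - z j)^(k+1))⁻¹ * k.factorial := by
    rw [MeasureTheory.integral_finset_sum _ (fun j _ => hint (z j) (hzs j))]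
    exact Finset.sum_congr rfl fun j _ => eval_integral k (by linarith [hzs j])
  have hintp : ∫ t in Ioi (0:ℝ), ∑ i, F (p i) t = ∑ i, ((s - p i)^(k+1))⁻¹ * k.factorial := by
    rw [MeasureTheory.integral_finset_sum _ (fun i _ => hint (p i) (hps i))]
    exact Finset.sum_congr rfl fun i _ => eval_integral k (by linarith [hps i])
  have hle : ∫ t in Ioi (0:ℝ), ∑ j, F (z j) t ≤ ∫ t in Ioi (0:ℝ), ∑ i, F (p i) t := by
    refine MeasureTheory.setIntegral_mono_on
      (MeasureTheory.integrable_finset_sum _ (fun j _ => hint (z j) (hzs j)))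
      (MeasureTheory.integrable_finset_sum _ (fun i _ => hint (p i) (hps i)))
      measurableSet_Ioi ?_
    intro t ht
    have ht0 : 0 < t := ht
    have key : ∀ a : ℝ, F a t = (t ^ (k:ℝ) * Real.exp (-(s*t))) * Real.exp (a * t) := by
      intro a
      rw [hF]
      simp only
      rw [mul_assoc, ← Real.exp_add]
      ring_nf
    simp only [key]
    rw [← Finset.mul_sum, ← Finset.mul_sum]
    have hnn : 0 ≤ t ^ (k:ℝ) * Real.exp (-(s*t)) := by positivity
    exact mul_le_mul_of_nonneg_left (hRHS t ht0.le) hnn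
  rw [hintz, hintp, ← Finset.sum_mul, ← Finset.sum_mul] at hle
  have hfac : (0:ℝ) < k.factorial := by exact_mod_cast k.factorial_pos
  exact le_of_mul_le_mul_right hle hfac

lemma tendsto_mul_inv_sub (a : ℝ) :
    Tendsto (fun s : ℝ => s * (s - a)⁻¹) atTop (nhds 1) := by
  have h0 : Tendsto (fun s : ℝ => (s - a)⁻¹) atTop (nhds 0) := by
    apply Tendsto.comp tendsto_inv_atTop_zero
    simpa [sub_eq_add_neg] using tendsto_atTop_add_const_right atTop (-a) tendsto_id
  have h : Tendsto (fun s : ℝ => 1 + a * (s - a)⁻¹) atTop (nhds (1 + a * 0)) :=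
    tendsto_const_nhds.add (h0.const_mul a)
  rw [mul_zero, add_zero] at h
  refine h.congr' ?_
  filter_upwards [eventually_gt_atTop a] with s hs
  have : s - a ≠ 0 := by linarith
  field_simp
  ring

lemma tendsto_pow_term (c : ℝ) :
    Tendsto (fun N : ℕ => ((1 + c/(N+1:ℝ))^(N+1))⁻¹) atTop (nhds (Real.exp (-c))) := by
  have h0 := Real.tendsto_one_add_div_pow_exp c
  have h1 : Tendsto (fun N : ℕ => (1 + c/(N+1:ℝ))^(N+1)) atTop (nhds (Real.exp c)) := by
    have := h0.comp (tendsto_add_atTop_nat 1)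
    refine this.congr fun N => ?_
    simp only [Function.comp]
    push_cast
    ring_nf
  have h2 := h1.inv₀ (Real.exp_ne_zero c)
  rwa [← Real.exp_neg] at h2

lemma RHS_of_C (n m : ℕ) (p : Fin n → ℝ) (z : Fin m → ℝ) (r₀ : ℝ)
    (hp : ∀ i, p i ≤ r₀) (hz : ∀ j, z j ≤ r₀)
    (hC : ∀ k : ℕ, ∀ s : ℝ, r₀ < s →
      ∑ j, ((s - z j)^(k+1))⁻¹ ≤ ∑ i, ((s - p i)^(k+1))⁻¹) :
    ∀ t : ℝ, 0 ≤ t → ∑ j, Real.exp (z j * t) ≤ ∑ i, Real.exp (p i * t) := by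
  intro t ht
  rcases eq_or_lt_of_le ht with h0 | htpos
  · -- t = 0 : reduce to m ≤ n
    have hmn : (m:ℝ) ≤ (n:ℝ) := by
      have htz : Tendsto (fun s : ℝ => ∑ j, s * (s - z j)⁻¹) atTop (nhds (m:ℝ)) := by
        have := tendsto_finset_sum (Finset.univ : Finset (Fin m))
          (fun j _ => tendsto_mul_inv_sub (z j))
        simpa using this
      have htp : Tendsto (fun s : ℝ => ∑ i, s * (s - p i)⁻¹) atTop (nhds (n:ℝ)) := by
        have := tendsto_finset_sum (Finset.univ : Finset (Fin n))
          (fun i _ => tendsto_mul_inv_sub (p i))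
        simpa using this
      refine le_of_tendsto_of_tendsto htz htp ?_
      filter_upwards [eventually_gt_atTop r₀, eventually_ge_atTop (0:ℝ)] with s hs hs0
      have h1 := hC 0 s hs
      simp only [zero_add, pow_one] at h1
      simp only [← Finset.mul_sum]
      exact mul_le_mul_of_nonneg_left h1 hs0
    simp [← h0, hmn]
  · -- t > 0
    set s : ℕ → ℝ := fun N => r₀ + (N+1)/t with hsdef
    have hsgt : ∀ N : ℕ, r₀ < s N := fun N => by
      have : (0:ℝ) < (N+1)/t := by positivity
      simp only [hsdef]; linarith
    have hident : ∀ a : ℝ, ∀ N : ℕ,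
        ((1 + (r₀ - a) * t/(N+1:ℝ))^(N+1))⁻¹
          = ((N+1:ℝ)/t)^(N+1) * ((s N - a)^(N+1))⁻¹ := by
      intro a N
      have hN : (0:ℝ) < (N:ℝ)+1 := by positivity
      have key : 1 + (r₀ - a) * t/(N+1:ℝ) = (s N - a) * (t/(N+1)) := by
        field_simp [hsdef]
        simp only [hsdef]
        field_simp
        ring
      rw [key, mul_pow, mul_inv,
        show ((t/((N:ℝ)+1))^(N+1))⁻¹ = (((N:ℝ)+1)/t)^(N+1) by rw [← inv_pow, inv_div]]
      ring
    have htendz : Tendsto (fun N : ℕ => ∑ j, ((N+1:ℝ)/t)^(N+1) * ((s N - z j)^(N+1))⁻¹)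
        atTop (nhds (∑ j, Real.exp ((z j - r₀) * t))) := by
      refine tendsto_finset_sum _ (fun j _ => ?_)
      have := tendsto_pow_term ((r₀ - z j) * t)
      rw [show -((r₀ - z j) * t) = (z j - r₀) * t by ring] at this
      exact this.congr fun N => hident (z j) N
    have htendp : Tendsto (fun N : ℕ => ∑ i, ((N+1:ℝ)/t)^(N+1) * ((s N - p i)^(N+1))⁻¹)
        atTop (nhds (∑ i, Real.exp ((p i - r₀) * t))) := by
      refine tendsto_finset_sum _ (fun i _ => ?_)
      have := tendsto_pow_term ((r₀ - p i) * t)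
      rw [show -((r₀ - p i) * t) = (p i - r₀) * t by ring] at this
      exact this.congr fun N => hident (p i) N
    have hineq : ∀ N : ℕ,
        ∑ j, ((N+1:ℝ)/t)^(N+1) * ((s N - z j)^(N+1))⁻¹
          ≤ ∑ i, ((N+1:ℝ)/t)^(N+1) * ((s N - p i)^(N+1))⁻¹ := by
      intro N
      have h1 := hC N (s N) (hsgt N)
      have hnn : (0:ℝ) ≤ ((N+1:ℝ)/t)^(N+1) := by positivity
      rw [← Finset.mul_sum, ← Finset.mul_sum]
      exact mul_le_mul_of_nonneg_left h1 hnn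
    have hlim := le_of_tendsto_of_tendsto' htendz htendp hineq
    -- multiply by exp (r₀ * t)
    have hE : (0:ℝ) < Real.exp (r₀ * t) := Real.exp_pos _
    calc ∑ j, Real.exp (z j * t)
        = (∑ j, Real.exp ((z j - r₀) * t)) * Real.exp (r₀ * t) := by
          rw [Finset.sum_mul]
          exact Finset.sum_congr rfl fun j _ => by
            rw [← Real.exp_add]; ring_nf
      _ ≤ (∑ i, Real.exp ((p i - r₀) * t)) * Real.exp (r₀ * t) :=
          mul_le_mul_of_nonneg_right hlim hE.le
      _ = ∑ i, Real.exp (p i * t) := by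
          rw [Finset.sum_mul]
          exact Finset.sum_congr rfl fun i _ => by
            rw [← Real.exp_add]; ring_nf


/-- Lemma 1 for real zeros and poles.
`H(s) = K ∏(s - zⱼ) / ∏(s - pᵢ)` with `K > 0` is logarithmically completely
monotonic on `(r₀, ∞)` (where `r₀` is the maximum of all poles and zeros) iff
`∑ exp(pᵢ t) ≥ ∑ exp(zⱼ t)` for all `t ≥ 0`. -/
theorem stmt_1 (n m : ℕ) (p : Fin n → ℝ) (z : Fin m → ℝ) (K : ℝ) (hK : 0 < K)
    (H : ℝ → ℝ) (hH : ∀ s, H s = K * (∏ j, (s - z j)) / ∏ i, (s - p i))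
    (r₀ : ℝ) (hr₀ : IsGreatest (Set.range p ∪ Set.range z) r₀) :
    (∀ s : ℝ, r₀ < s → 0 < H s ∧ ∀ k : ℕ, 1 ≤ k →
        0 ≤ (-1 : ℝ) ^ k * iteratedDeriv k (fun u => Real.log (H u)) s) ↔
    (∀ t : ℝ, 0 ≤ t → ∑ j, Real.exp (z j * t) ≤ ∑ i, Real.exp (p i * t)) := by
  have hp : ∀ i, p i ≤ r₀ := fun i => hr₀.2 (Set.mem_union_left _ ⟨i, rfl⟩)
  have hz : ∀ j, z j ≤ r₀ := fun j => hr₀.2 (Set.mem_union_right _ ⟨j, rfl⟩)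
  have hsign : ∀ k : ℕ, ((-1:ℝ))^(k+1) * (-1)^k = -1 := fun k => by
    rw [← pow_add]
    exact Odd.neg_one_pow ⟨k, by ring⟩
  constructor
  · intro hL
    refine RHS_of_C n m p z r₀ hp hz (fun k s hs => ?_)
    have h := (hL s hs).2 (k+1) (by omega)
    rw [key_formula n m p z K hK H hH r₀ hp hz k s hs] at h
    set D := (∑ j, ((s - z j)^(k+1))⁻¹) - ∑ i, ((s - p i)^(k+1))⁻¹ with hD
    have h2 : (0:ℝ) ≤ -((k.factorial:ℝ) * D) := by
      have : (-1:ℝ)^(k+1) * ((-1)^k * (k.factorial:ℝ) * D) = -((k.factorial:ℝ) * D) := by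
        rw [show (-1:ℝ)^(k+1) * ((-1)^k * (k.factorial:ℝ) * D)
            = ((-1:ℝ)^(k+1) * (-1)^k) * ((k.factorial:ℝ) * D) by ring, hsign k]
        ring
      rwa [this] at h
    have hfac : (0:ℝ) < k.factorial := by exact_mod_cast k.factorial_pos
    have hD0 : D ≤ 0 := by nlinarith
    rw [hD] at hD0
    linarith
  · intro hR s hs
    have hzpos : ∀ j, 0 < s - z j := fun j => by have := hz j; linarith
    have hppos : ∀ i, 0 < s - p i := fun i => by have := hp i; linarith
    have h1 : 0 < ∏ j, (s - z j) := Finset.prod_pos (fun j _ => hzpos j)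
    have h2 : 0 < ∏ i, (s - p i) := Finset.prod_pos (fun i _ => hppos i)
    refine ⟨by rw [hH s]; exact div_pos (mul_pos hK h1) h2, fun k hk => ?_⟩
    obtain ⟨k', rfl⟩ : ∃ k', k = k'+1 := ⟨k-1, by omega⟩
    rw [key_formula n m p z K hK H hH r₀ hp hz k' s hs]
    have hC := C_of_RHS n m p z hR k' s (fun i => lt_of_le_of_lt (hp i) hs)
      (fun j => lt_of_le_of_lt (hz j) hs)
    set D := (∑ j, ((s - z j)^(k'+1))⁻¹) - ∑ i, ((s - p i)^(k'+1))⁻¹ with hD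
    have hDle : D ≤ 0 := by rw [hD]; linarith
    have hfac : (0:ℝ) < k'.factorial := by exact_mod_cast k'.factorial_pos
    rw [show (-1:ℝ)^(k'+1) * ((-1)^k' * (k'.factorial:ℝ) * D)
        = ((-1:ℝ)^(k'+1) * (-1)^k') * ((k'.factorial:ℝ) * D) by ring, hsign k']
    nlinarith
end

section
/- Let n ≥ 1, m ≥ 1, p ∈ ℂⁿ and z ∈ ℂᵐ, and suppose that for every real t ≥ 0 one has Re(∑_{i=1}^n exp(pᵢ t)) ≥ Re(∑_{j=1}^m exp(zⱼ t)). Then: (a) n ≥ m; (b) max_i Re(pᵢ) ≥ max_j Re(zⱼ); and (c) if n = m, then Re(∑_{i=1}^n pᵢ) ≥ Re(∑_{j=1}^n zⱼ). -/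
open MeasureTheory Set Filter Complex Topology

private lemma myIntOn {c : ℂ} (hc : c.re < 0) :
    IntegrableOn (fun t : ℝ => Complex.exp (c * t)) (Ioi 0) := by
  have hb : IntegrableOn (fun t : ℝ => Real.exp (-(-c.re) * t)) (Ioi (0:ℝ)) :=
    exp_neg_integrableOn_Ioi 0 (by linarith)
  refine hb.integrable.mono' ?_ ?_
  · exact (Complex.continuous_exp.comp
      (continuous_const.mul continuous_ofReal)).aestronglyMeasurable
  · filter_upwards with t
    rw [Complex.norm_exp]
    simp [Complex.mul_re]

private lemma myInt {c : ℂ} (hc : c.re < 0) :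
    ∫ t : ℝ in Ioi 0, Complex.exp (c * t) = -c⁻¹ := by
  have hc0 : c ≠ 0 := fun h => by simp [h] at hc
  have A : ∀ x : ℂ, HasDerivAt (fun x => c⁻¹ * Complex.exp (c * x)) (Complex.exp (c * x)) x := by
    intro x
    refine HasDerivAt.congr_deriv ((((hasDerivAt_id x).const_mul c)).cexp.const_mul c⁻¹) ?_
    simp [mul_comm]
    field_simp
  have B : Tendsto (fun y : ℝ => c⁻¹ * Complex.exp (c * y)) atTop (𝓝 (c⁻¹ * 0)) := by
    refine Tendsto.const_mul _ (tendsto_zero_iff_norm_tendsto_zero.mpr ?_)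
    have : ∀ y : ℝ, ‖Complex.exp (c * y)‖ = Real.exp (c.re * y) := by
      intro y; rw [Complex.norm_exp]; simp [Complex.mul_re]
    simp_rw [this]
    exact Real.tendsto_exp_atBot.comp (tendsto_id.const_mul_atTop_of_neg hc)
  have := integral_Ioi_of_hasDerivAt_of_tendsto' (fun x _ => (A ↑x).comp_ofReal)
    (myIntOn hc) B
  rw [this]
  simp

private lemma lap {k : ℕ} (q : Fin k → ℂ) (σ : ℂ) (hq : ∀ i, (q i).re < σ.re) :
    IntegrableOn (fun t : ℝ =>
        Complex.exp (-σ * t) * ((∑ i, Complex.exp (q i * t)).re : ℂ)) (Ioi 0) ∧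
    (∫ t : ℝ in Ioi 0, Complex.exp (-σ * t) * ((∑ i, Complex.exp (q i * t)).re : ℂ))
      = (∑ i, ((σ - q i)⁻¹ + (σ - (starRingEnd ℂ) (q i))⁻¹)) / 2 := by
  have e : (fun t : ℝ => Complex.exp (-σ * t) * ((∑ i, Complex.exp (q i * t)).re : ℂ))
      = fun t : ℝ => (∑ i, (Complex.exp ((q i - σ) * t)
          + Complex.exp (((starRingEnd ℂ) (q i) - σ) * t))) / 2 := by
    funext t
    have h1 : ((∑ i, Complex.exp (q i * t)).re : ℂ)
        = (∑ i, (Complex.exp (q i * t) + Complex.exp ((starRingEnd ℂ) (q i) * t))) / 2 := by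
      rw [show ((∑ i, Complex.exp (q i * t)).re : ℂ)
          = ((∑ i, Complex.exp (q i * t)) + (starRingEnd ℂ) (∑ i, Complex.exp (q i * t))) / 2 by
        rw [Complex.add_conj]; push_cast; ring]
      rw [map_sum, ← Finset.sum_add_distrib]
      congr 1
      refine Finset.sum_congr rfl fun i _ => ?_
      rw [← Complex.exp_conj, map_mul, Complex.conj_ofReal]
    rw [h1, ← mul_div_assoc, Finset.mul_sum]
    refine congrArg (· / 2) (Finset.sum_congr rfl fun i _ => ?_)
    rw [mul_add, ← Complex.exp_add, ← Complex.exp_add]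
    congr 2 <;> ring
  have hint : ∀ i : Fin k, IntegrableOn (fun t : ℝ => Complex.exp ((q i - σ) * t)
      + Complex.exp (((starRingEnd ℂ) (q i) - σ) * t)) (Ioi 0) := by
    intro i
    exact (myIntOn (by simp [Complex.sub_re]; linarith [hq i])).add
      (myIntOn (by simp [Complex.sub_re]; linarith [hq i]))
  constructor
  · rw [e]
    exact (integrable_finset_sum _ fun i _ => hint i).div_const 2
  · rw [e]
    rw [integral_div, integral_finset_sum _ fun i _ => hint i]
    congr 1
    refine Finset.sum_congr rfl fun i _ => ?_
    rw [integral_add (myIntOn (by simp [Complex.sub_re]; linarith [hq i]))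
      (myIntOn (by simp [Complex.sub_re]; linarith [hq i])),
      myInt (by simp [Complex.sub_re]; linarith [hq i]),
      myInt (by simp [Complex.sub_re]; linarith [hq i])]
    rw [← inv_neg, ← inv_neg, neg_sub, neg_sub]

private lemma point (s ω t x : ℝ) :
    ((Real.exp (-s*t) * (1 + Real.cos (ω*t)) * x : ℝ) : ℂ)
      = Complex.exp (-(s:ℂ) * t) * x
        + (Complex.exp (-((s:ℂ) - ω*I) * t) * x + Complex.exp (-((s:ℂ) + ω*I) * t) * x)/2 := by
  have c2 : Complex.exp (-((s:ℂ) - ω*I) * t) + Complex.exp (-((s:ℂ) + ω*I) * t)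
      = Complex.exp (-(s:ℂ) * t) * (2 * Complex.cos ((ω:ℂ) * t)) := by
    rw [show (-((s:ℂ) - ω*I) * t : ℂ) = -(s:ℂ)*t + ((ω:ℂ)*t)*I by ring,
        show (-((s:ℂ) + ω*I) * t : ℂ) = -(s:ℂ)*t + (-((ω:ℂ)*t))*I by ring,
        Complex.exp_add, Complex.exp_add, Complex.exp_mul_I, Complex.exp_mul_I,
        Complex.cos_neg, Complex.sin_neg]
    ring
  have e1 : ((Real.exp (-s*t) * (1 + Real.cos (ω*t)) * x : ℝ) : ℂ)
      = Complex.exp (-(s:ℂ)*t) * (1 + Complex.cos ((ω:ℂ)*t)) * x := by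
    push_cast
    ring_nf
  rw [e1]
  rw [show Complex.exp (-((s:ℂ) - ω*I) * t) * x + Complex.exp (-((s:ℂ) + ω*I) * t) * x
      = (Complex.exp (-((s:ℂ) - ω*I) * t) + Complex.exp (-((s:ℂ) + ω*I) * t)) * x by ring, c2]
  ring

private lemma hder {k : ℕ} (q : Fin k → ℂ) :
    HasDerivAt (fun t : ℝ => (∑ i, Complex.exp (q i * t)).re) (∑ i, q i).re 0 := by
  have h1 : ∀ i : Fin k, HasDerivAt (fun t : ℝ => Complex.exp (q i * t)) (q i) 0 := by
    intro i
    have d : HasDerivAt (fun w : ℂ => Complex.exp (q i * w))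
        (Complex.exp (q i * 0) * (q i * 1)) 0 :=
      ((hasDerivAt_id (0:ℂ)).const_mul (q i)).cexp
    have := d.comp_ofReal (z := 0)
    simpa using this
  have h2 : HasDerivAt (fun t : ℝ => ∑ i, Complex.exp (q i * t)) (∑ i, q i) 0 :=
    HasDerivAt.fun_sum fun i _ => h1 i
  have := Complex.reCLM.hasFDerivAt.comp_hasDerivAt 0 h2
  simpa [Function.comp_def] using this

private lemma re_inv_nonneg {w : ℂ} (hw : 0 ≤ w.re) : 0 ≤ (w⁻¹).re := by
  rw [Complex.inv_re]; exact div_nonneg hw (Complex.normSq_nonneg w)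

private lemma re_inv_le {w : ℂ} (hw : 0 < w.re) : (w⁻¹).re ≤ 1 / w.re := by
  rw [Complex.inv_re, Complex.normSq_apply]
  rw [div_le_div_iff₀ (by nlinarith [mul_self_nonneg w.im]) hw]
  nlinarith [mul_self_nonneg w.im]

private lemma re_div_two (w : ℂ) : (w/2).re = w.re/2 := by
  simp [Complex.div_re, Complex.normSq]

private lemma re_comb (u1 u2 u3 v1 v2 v3 : ℂ) :
    ((u1 - v1) + ((u2 - v2) + (u3 - v3))/2).re
      = (u1.re - v1.re) + ((u2.re - v2.re) + (u3.re - v3.re))/2 := by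
  rw [Complex.add_re, re_div_two, Complex.add_re, Complex.sub_re, Complex.sub_re,
    Complex.sub_re]

private lemma my_integral_ofReal {f : ℝ → ℝ} {μ : MeasureTheory.Measure ℝ} :
    ∫ x, ((f x : ℝ) : ℂ) ∂μ = ((∫ x, f x ∂μ : ℝ) : ℂ) :=
  integral_ofReal

/-- Proposition 3: necessary conditions.
If `Re(∑ exp(pᵢ t)) ≥ Re(∑ exp(zⱼ t))` for all `t ≥ 0`, then (a) `n ≥ m`,
(b) `max Re(pᵢ) ≥ max Re(zⱼ)`, and (c) if `n = m` then `Re(∑ pᵢ) ≥ Re(∑ zⱼ)`. -/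
theorem stmt_2 (n m : ℕ) (hn : 1 ≤ n) (hm : 1 ≤ m) (p : Fin n → ℂ) (z : Fin m → ℂ)
    (h : ∀ t : ℝ, 0 ≤ t →
      (∑ j, Complex.exp (z j * t)).re ≤ (∑ i, Complex.exp (p i * t)).re) :
    m ≤ n ∧
    (Finset.univ.sup' (Finset.univ_nonempty_iff.mpr (Fin.pos_iff_nonempty.mp hm))
        (fun j => (z j).re)) ≤
      (Finset.univ.sup' (Finset.univ_nonempty_iff.mpr (Fin.pos_iff_nonempty.mp hn))
        (fun i => (p i).re)) ∧
    (n = m → (∑ j, z j).re ≤ (∑ i, p i).re) := by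
  refine ⟨?_, ?_, ?_⟩
  · -- (a)
    have h0 := h 0 le_rfl
    simp at h0
    exact_mod_cast h0
  · -- (b)
    by_contra hab
    push_neg at hab
    set a : ℝ := Finset.univ.sup' (Finset.univ_nonempty_iff.mpr (Fin.pos_iff_nonempty.mp hn))
      (fun i => (p i).re) with ha
    set b : ℝ := Finset.univ.sup' (Finset.univ_nonempty_iff.mpr (Fin.pos_iff_nonempty.mp hm))
      (fun j => (z j).re) with hb
    have hpa : ∀ i, (p i).re ≤ a := fun i => by
      rw [ha]; exact Finset.le_sup' (fun i => (p i).re) (Finset.mem_univ i)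
    have hzb : ∀ j, (z j).re ≤ b := fun j => by
      rw [hb]; exact Finset.le_sup' (fun j => (z j).re) (Finset.mem_univ j)
    obtain ⟨j₀, -, hj₀0⟩ := Finset.exists_mem_eq_sup'
      (Finset.univ_nonempty_iff.mpr (Fin.pos_iff_nonempty.mp hm)) (fun j => (z j).re)
    have hj₀ : b = (z j₀).re := by rw [hb]; exact hj₀0
    set ω : ℝ := (z j₀).im with hω
    have hn' : (1:ℝ) ≤ n := by exact_mod_cast hn
    have hba : 0 < b - a := sub_pos.2 hab
    have hεpos : 0 < (b - a)/(16*n) := by positivity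
    set s : ℝ := b + (b - a)/(16*n) with hs
    have hsb : b < s := by rw [hs]; linarith
    have hsa : a < s := lt_trans hab hsb
    set hfun : ℝ → ℝ := fun t => (∑ i, Complex.exp (p i * t)).re
      - (∑ j, Complex.exp (z j * t)).re with hfdef
    have hfnonneg : ∀ t : ℝ, 0 ≤ t → 0 ≤ hfun t := fun t ht => sub_nonneg.2 (h t ht)
    set Pv : ℂ → ℂ := fun σ => (∑ i, ((σ - p i)⁻¹ + (σ - (starRingEnd ℂ) (p i))⁻¹)) / 2 with hPv
    set Zv : ℂ → ℂ := fun σ => (∑ j, ((σ - z j)⁻¹ + (σ - (starRingEnd ℂ) (z j))⁻¹)) / 2 with hZv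
    have master : ∀ σ : ℂ, σ.re = s →
        IntegrableOn (fun t : ℝ => Complex.exp (-σ * t) * ((hfun t : ℝ) : ℂ)) (Ioi 0) ∧
        (∫ t : ℝ in Ioi 0, Complex.exp (-σ * t) * ((hfun t : ℝ) : ℂ)) = Pv σ - Zv σ := by
      intro σ hσ
      have hp' : ∀ i, (p i).re < σ.re := fun i => by
        rw [hσ]; exact lt_of_le_of_lt (hpa i) hsa
      have hz' : ∀ j, (z j).re < σ.re := fun j => by
        rw [hσ]; exact lt_of_le_of_lt (hzb j) hsb
      have e : (fun t : ℝ => Complex.exp (-σ * t) * ((hfun t : ℝ) : ℂ))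
          = fun t : ℝ => Complex.exp (-σ*t) * ((∑ i, Complex.exp (p i * t)).re : ℂ)
              - Complex.exp (-σ*t) * ((∑ j, Complex.exp (z j * t)).re : ℂ) := by
        funext t
        simp only [hfdef]
        push_cast
        ring
      constructor
      · rw [e]; exact ((lap p σ hp').1).sub ((lap z σ hz').1)
      · rw [e, integral_sub (lap p σ hp').1 (lap z σ hz').1,
          (lap p σ hp').2, (lap z σ hz').2]
    have hσ1 : ((s:ℂ)).re = s := by simp
    have hσ2 : ((s:ℂ) - ω*I).re = s := by simp
    have hσ3 : ((s:ℂ) + ω*I).re = s := by simp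
    have w0 : 0 ≤ ∫ t : ℝ in Ioi 0, Real.exp (-s*t) * (1 + Real.cos (ω*t)) * hfun t := by
      refine setIntegral_nonneg measurableSet_Ioi fun t ht => ?_
      have h1 : (0:ℝ) ≤ 1 + Real.cos (ω*t) := by nlinarith [Real.neg_one_le_cos (ω*t)]
      exact mul_nonneg (mul_nonneg (Real.exp_pos _).le h1) (hfnonneg t (le_of_lt ht))
    obtain ⟨i1, e1⟩ := master (s:ℂ) hσ1
    obtain ⟨i2, e2⟩ := master ((s:ℂ) - ω*I) hσ2
    obtain ⟨i3, e3⟩ := master ((s:ℂ) + ω*I) hσ3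
    have hW : ((∫ t : ℝ in Ioi 0, Real.exp (-s*t) * (1 + Real.cos (ω*t)) * hfun t : ℝ) : ℂ)
        = (Pv ↑s - Zv ↑s) + ((Pv ((s:ℂ) - ω*I) - Zv ((s:ℂ) - ω*I))
            + (Pv ((s:ℂ) + ω*I) - Zv ((s:ℂ) + ω*I)))/2 := by
      rw [← my_integral_ofReal]
      simp_rw [point s ω _ (hfun _)]
      have i23 : IntegrableOn (fun t : ℝ => (Complex.exp (-((s:ℂ) - ω*I) * t) * ((hfun t : ℝ):ℂ)
          + Complex.exp (-((s:ℂ) + ω*I) * t) * ((hfun t : ℝ):ℂ))/2) (Ioi 0) :=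
        (i2.add i3).div_const 2
      rw [integral_add i1 i23, integral_div, integral_add i2 i3, e1, e2, e3]
    have w0' : (0:ℝ) ≤ ((Pv ↑s - Zv ↑s) + ((Pv ((s:ℂ) - ω*I) - Zv ((s:ℂ) - ω*I))
        + (Pv ((s:ℂ) + ω*I) - Zv ((s:ℂ) + ω*I)))/2).re := by
      rw [← hW, Complex.ofReal_re]; exact w0
    rw [re_comb] at w0'
    -- bounds
    have hPb : ∀ σ : ℂ, σ.re = s → (Pv σ).re ≤ (n:ℝ)/(b-a) := by
      intro σ hσ
      have hterm : ∀ i ∈ (Finset.univ : Finset (Fin n)),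
          ((σ - p i)⁻¹ + (σ - (starRingEnd ℂ) (p i))⁻¹).re ≤ 2/(b-a) := by
        intro i _
        rw [Complex.add_re]
        have r1 : (σ - p i).re = s - (p i).re := by rw [Complex.sub_re, hσ]
        have r2 : (σ - (starRingEnd ℂ) (p i)).re = s - (p i).re := by
          rw [Complex.sub_re, hσ, Complex.conj_re]
        have hpos : 0 < s - (p i).re := by linarith [hpa i]
        have b1 : ((σ - p i)⁻¹).re ≤ 1/(s - (p i).re) := by
          have := re_inv_le (w := σ - p i) (by rw [r1]; exact hpos)
          rwa [r1] at this
        have b2 : ((σ - (starRingEnd ℂ) (p i))⁻¹).re ≤ 1/(s - (p i).re) := by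
          have := re_inv_le (w := σ - (starRingEnd ℂ) (p i)) (by rw [r2]; exact hpos)
          rwa [r2] at this
        have b3 : 1/(s - (p i).re) ≤ 1/(b-a) :=
          one_div_le_one_div_of_le hba (by linarith [hpa i])
        have : (2:ℝ)/(b-a) = 1/(b-a) + 1/(b-a) := by ring
        linarith
      have hsum : (∑ i, ((σ - p i)⁻¹ + (σ - (starRingEnd ℂ) (p i))⁻¹)).re
          ≤ (n:ℝ) * (2/(b-a)) := by
        rw [Complex.re_sum]
        calc (∑ i, ((σ - p i)⁻¹ + (σ - (starRingEnd ℂ) (p i))⁻¹).re)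
            ≤ ∑ _i : Fin n, 2/(b-a) := Finset.sum_le_sum hterm
          _ = (n:ℝ) * (2/(b-a)) := by
              simp [Finset.sum_const, nsmul_eq_mul]
      simp only [hPv]
      rw [re_div_two]
      rw [show (n:ℝ)*(2/(b-a)) = 2*((n:ℝ)/(b-a)) by ring] at hsum
      linarith
    have hZ0 : ∀ σ : ℂ, σ.re = s → 0 ≤ (Zv σ).re := by
      intro σ hσ
      simp only [hZv]
      rw [re_div_two, Complex.re_sum]
      have : ∀ j ∈ (Finset.univ : Finset (Fin m)),
          (0:ℝ) ≤ ((σ - z j)⁻¹ + (σ - (starRingEnd ℂ) (z j))⁻¹).re := by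
        intro j _
        rw [Complex.add_re]
        have r1 : (σ - z j).re = s - (z j).re := by rw [Complex.sub_re, hσ]
        have r2 : (σ - (starRingEnd ℂ) (z j)).re = s - (z j).re := by
          rw [Complex.sub_re, hσ, Complex.conj_re]
        have := re_inv_nonneg (w := σ - z j) (by rw [r1]; linarith [hzb j])
        have := re_inv_nonneg (w := σ - (starRingEnd ℂ) (z j)) (by rw [r2]; linarith [hzb j])
        linarith
      have := Finset.sum_nonneg this
      linarith
    have hZ3 : (1/(s-b))/2 ≤ (Zv ((s:ℂ) + ω*I)).re := by
      simp only [hZv]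
      rw [re_div_two, Complex.re_sum]
      have key0 : ((s:ℂ) + ω*I - z j₀) = ((s - b : ℝ) : ℂ) := by
        apply Complex.ext
        · simp [hj₀]
        · simp [hω]
      have hnn : ∀ j ∈ (Finset.univ : Finset (Fin m)),
          (0:ℝ) ≤ (((s:ℂ) + ω*I - z j)⁻¹ + ((s:ℂ) + ω*I - (starRingEnd ℂ) (z j))⁻¹).re := by
        intro j _
        rw [Complex.add_re]
        have r1 : ((s:ℂ) + ω*I - z j).re = s - (z j).re := by
          rw [Complex.sub_re, hσ3]
        have r2 : ((s:ℂ) + ω*I - (starRingEnd ℂ) (z j)).re = s - (z j).re := by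
          rw [Complex.sub_re, hσ3, Complex.conj_re]
        have := re_inv_nonneg (w := (s:ℂ) + ω*I - z j) (by rw [r1]; linarith [hzb j])
        have := re_inv_nonneg (w := (s:ℂ) + ω*I - (starRingEnd ℂ) (z j))
          (by rw [r2]; linarith [hzb j])
        linarith
      have hterm : 1/(s-b)
          ≤ ((((s:ℂ) + ω*I - z j₀)⁻¹ + (((s:ℂ) + ω*I - (starRingEnd ℂ) (z j₀))⁻¹))).re := by
        rw [Complex.add_re, key0, ← Complex.ofReal_inv, Complex.ofReal_re]
        have r2 : ((s:ℂ) + ω*I - (starRingEnd ℂ) (z j₀)).re = s - (z j₀).re := by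
          rw [Complex.sub_re, hσ3, Complex.conj_re]
        have h2 := re_inv_nonneg (w := (s:ℂ) + ω*I - (starRingEnd ℂ) (z j₀))
          (by rw [r2]; linarith [hzb j₀])
        rw [one_div]
        linarith
      have hsingle := Finset.single_le_sum (f := fun j =>
        ((((s:ℂ) + ω*I - z j)⁻¹ + (((s:ℂ) + ω*I - (starRingEnd ℂ) (z j))⁻¹))).re)
        hnn (Finset.mem_univ j₀)
      linarith
    -- final contradiction
    have hkey : 1/(s-b) = 16 * ((n:ℝ)/(b-a)) := by
      rw [show s - b = (b-a)/(16*n) by rw [hs]; ring, one_div_div]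
      ring
    have hC : 0 < (n:ℝ)/(b-a) := by positivity
    have P1 := hPb ↑s hσ1
    have P2 := hPb ((s:ℂ) - ω*I) hσ2
    have P3 := hPb ((s:ℂ) + ω*I) hσ3
    have Z1 := hZ0 ↑s hσ1
    have Z2 := hZ0 ((s:ℂ) - ω*I) hσ2
    rw [hkey] at hZ3
    linarith
  · -- (c)
    intro hnm
    subst hnm
    have hf : HasDerivAt (fun t : ℝ => (∑ i, Complex.exp (p i * t)).re
        - (∑ j, Complex.exp (z j * t)).re) ((∑ i, p i).re - (∑ j, z j).re) 0 :=
      (hder p).sub (hder z)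
    have hf0 : ((∑ i, Complex.exp (p i * (0:ℝ))).re - (∑ j, Complex.exp (z j * (0:ℝ))).re) = 0 := by
      simp
    have hge : ∀ᶠ t in 𝓝[>] (0:ℝ),
        0 ≤ slope (fun t : ℝ => (∑ i, Complex.exp (p i * t)).re
          - (∑ j, Complex.exp (z j * t)).re) 0 t := by
      filter_upwards [self_mem_nhdsWithin] with t ht
      have ht' : (0:ℝ) < t := ht
      have hnum : 0 ≤ (∑ i, Complex.exp (p i * t)).re - (∑ j, Complex.exp (z j * t)).re :=
        sub_nonneg.2 (h t ht'.le)
      rw [slope_def_field, hf0, sub_zero, sub_zero]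
      exact div_nonneg hnum ht'.le
    have hsub : Ioi (0:ℝ) ⊆ {(0:ℝ)}ᶜ := fun x hx => ne_of_gt hx
    have htend := (hasDerivAt_iff_tendsto_slope.mp hf).mono_left
      (nhdsWithin_mono 0 hsub)
    have := ge_of_tendsto htend hge
    linarith
end

section
/- Let n ≥ 1, let p, z ∈ ℝⁿ, let μ ≥ 1 be an integer, and let δ ∈ ℝ satisfy δ > -min over all components of p and z (so pᵢ + δ > 0 and zᵢ + δ > 0 for all i). Suppose that (1) the vector with components (pᵢ + δ)^μ weakly majorizes the vector with components (zᵢ + δ)^μ, and (2) for every integer k with 1 ≤ k ≤ μ - 1, ∑_{i=1}^n (pᵢ + δ)^k ≥ ∑_{i=1}^n (zᵢ + δ)^k. Then for every real t ≥ 0, ∑_{i=1}^n exp(pᵢ t) ≥ ∑_{i=1}^n exp(zᵢ t). -/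
/-- `x` weakly majorizes `y`: for each `k`, the sum of the `k` largest
components of `x` is at least the sum of the `k` largest components of `y`.
Equivalently: for every subset `T`, the sum of `y` over `T` is at most the sum
of `x` over some subset `S` of the same cardinality. -/
def WeakMajorizes {n : ℕ} (x y : Fin n → ℝ) : Prop :=
  ∀ T : Finset (Fin n), ∃ S : Finset (Fin n), S.card = T.card ∧ ∑ i ∈ T, y i ≤ ∑ i ∈ S, x i


open Finset

-- subgradient inequality for rpow
lemma subgrad {x y c : ℝ} (hx : 0 ≤ x) (hy : 0 ≤ y) (hc : 1 ≤ c) :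
    y ^ c + c * y ^ (c - 1) * (x - y) ≤ x ^ c := by
  rcases eq_or_lt_of_le hy with h0 | h0
  · rcases eq_or_lt_of_le hc with h1 | h1
    · subst h1; simp [← h0]
    · rw [← h0, Real.zero_rpow (by intro h; rw [h] at hc; linarith), Real.zero_rpow (by intro h; linarith)]
      simpa using Real.rpow_nonneg hx c
  · have hs : (-1 : ℝ) ≤ x / y - 1 := by
      have : 0 ≤ x / y := div_nonneg hx hy
      linarith
    have hb := one_add_mul_self_le_rpow_one_add hs hc
    have h1s : 1 + (x / y - 1) = x / y := by ring
    rw [h1s] at hb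
    have hdiv : (x / y) ^ c = x ^ c / y ^ c := Real.div_rpow hx hy c
    rw [hdiv] at hb
    have hyc : 0 < y ^ c := Real.rpow_pos_of_pos h0 c
    have hmul := mul_le_mul_of_nonneg_right hb hyc.le
    rw [div_mul_cancel₀ _ hyc.ne'] at hmul
    have hpow : y ^ (c - 1) = y ^ c / y := by
      rw [Real.rpow_sub h0, Real.rpow_one]
    calc y ^ c + c * y ^ (c - 1) * (x - y)
        = (1 + c * (x / y - 1)) * y ^ c := by
          rw [hpow]; field_simp
      _ ≤ x ^ c := hmul

lemma abel_nonneg (n : ℕ) (c d : ℕ → ℝ) (hanti : ∀ i j, i ≤ j → c j ≤ c i)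
    (hc0 : ∀ i, 0 ≤ c i) (hD : ∀ k, k ≤ n → 0 ≤ ∑ i ∈ range k, d i) :
    0 ≤ ∑ i ∈ range n, c i * d i := by
  have habel := Finset.sum_range_by_parts (M := ℝ) c d n
  simp only [smul_eq_mul] at habel
  rw [habel]
  have h1 : 0 ≤ c (n - 1) * ∑ i ∈ range n, d i :=
    mul_nonneg (hc0 _) (hD n le_rfl)
  have h2 : ∑ i ∈ range (n - 1), (c (i + 1) - c i) * ∑ j ∈ range (i + 1), d j ≤ 0 := by
    apply Finset.sum_nonpos
    intro i hi
    have hi' : i + 1 ≤ n := by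
      have := Finset.mem_range.mp hi; omega
    exact mul_nonpos_of_nonpos_of_nonneg (by linarith [hanti i (i+1) (Nat.le_succ i)])
      (hD (i+1) hi')
  linarith

lemma core (n : ℕ) (u v : ℕ → ℝ) (hu0 : ∀ i, 0 ≤ u i) (hv0 : ∀ i, 0 ≤ v i)
    (hvanti : ∀ i j, i ≤ j → v j ≤ v i)
    (hsum : ∀ k, k ≤ n → ∑ i ∈ range k, v i ≤ ∑ i ∈ range k, u i)
    (c : ℝ) (hc : 1 ≤ c) :
    ∑ i ∈ range n, v i ^ c ≤ ∑ i ∈ range n, u i ^ c := by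
  have key : 0 ≤ ∑ i ∈ range n, (c * v i ^ (c - 1)) * (u i - v i) := by
    apply abel_nonneg n _ _
    · intro i j hij
      have : v j ^ (c - 1) ≤ v i ^ (c - 1) :=
        Real.rpow_le_rpow (hv0 j) (hvanti i j hij) (by linarith)
      nlinarith
    · intro i
      have := Real.rpow_nonneg (hv0 i) (c - 1)
      nlinarith
    · intro k hk
      rw [Finset.sum_sub_distrib]
      linarith [hsum k hk]
  have term : ∀ i ∈ range n, v i ^ c + (c * v i ^ (c - 1)) * (u i - v i) ≤ u i ^ c :=
    fun i _ => subgrad (hu0 i) (hv0 i) hc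
  calc ∑ i ∈ range n, v i ^ c
      ≤ ∑ i ∈ range n, (v i ^ c + (c * v i ^ (c - 1)) * (u i - v i)) := by
        rw [Finset.sum_add_distrib]; linarith
    _ ≤ ∑ i ∈ range n, u i ^ c := Finset.sum_le_sum term

lemma strictMono_nat_le {k n : ℕ} (f : Fin k → Fin n) (hf : StrictMono f) :
    ∀ (j : ℕ) (hj : j < k), j ≤ (f ⟨j, hj⟩ : ℕ) := by
  intro j
  induction j with
  | zero => intro _; exact Nat.zero_le _
  | succ m ih =>
    intro hj
    have hm : m < k := Nat.lt_of_succ_lt hj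
    have h1 : f ⟨m, hm⟩ < f ⟨m + 1, hj⟩ := hf (by simp [Fin.lt_def])
    have h2 : (f ⟨m, hm⟩ : ℕ) < (f ⟨m + 1, hj⟩ : ℕ) := h1
    have := ih hm
    omega

lemma subset_sum_le_top {n k : ℕ} (d : Fin n → ℝ) (hd : Antitone d)
    (S : Finset (Fin n)) (hS : S.card = k) (hk : k ≤ n) :
    ∑ i ∈ S, d i ≤ ∑ i : Fin k, d (Fin.castLE hk i) := by
  have e := S.orderIsoOfFin hS
  have hmono : StrictMono (fun i : Fin k => ((e i : S) : Fin n)) := by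
    intro a b hab
    exact Subtype.coe_lt_coe.mpr (e.lt_iff_lt.mpr hab)
  have hsum : ∑ i ∈ S, d i = ∑ i : Fin k, d ((e i : S) : Fin n) := by
    rw [← Finset.sum_attach S (fun x => d x)]
    exact (Fintype.sum_equiv e.toEquiv (fun i => d ((e i : S) : Fin n))
      (fun x => d ((x : S) : Fin n)) (fun i => rfl)).symm
  rw [hsum]
  apply Finset.sum_le_sum
  intro i _
  apply hd
  rw [Fin.le_def]
  exact strictMono_nat_le _ hmono i i.isLt

lemma maj_rpow {n : ℕ} (a b : Fin n → ℝ) (ha : ∀ i, 0 ≤ a i) (hb : ∀ i, 0 ≤ b i)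
    (hmaj : WeakMajorizes a b) (c : ℝ) (hc : 1 ≤ c) :
    ∑ i, b i ^ c ≤ ∑ i, a i ^ c := by
  classical
  -- descending rearrangements
  set σa := Tuple.sort a with hσa
  set σb := Tuple.sort b with hσb
  set ua : Fin n → ℝ := fun i => a (σa i.rev) with hua
  set vb : Fin n → ℝ := fun i => b (σb i.rev) with hvb
  have hua_anti : Antitone ua := by
    intro i j hij
    exact Tuple.monotone_sort a (Fin.rev_le_rev.mpr hij)
  have hvb_anti : Antitone vb := by
    intro i j hij
    exact Tuple.monotone_sort b (Fin.rev_le_rev.mpr hij)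
  -- extensions to ℕ
  set u : ℕ → ℝ := fun i => if h : i < n then ua ⟨i, h⟩ else 0 with hu
  set v : ℕ → ℝ := fun i => if h : i < n then vb ⟨i, h⟩ else 0 with hv
  have hu0 : ∀ i, 0 ≤ u i := by
    intro i; rw [hu]; dsimp only; split
    · exact ha _
    · exact le_rfl
  have hv0 : ∀ i, 0 ≤ v i := by
    intro i; rw [hv]; dsimp only; split
    · exact hb _
    · exact le_rfl
  have hvanti : ∀ i j : ℕ, i ≤ j → v j ≤ v i := by
    intro i j hij
    rw [hv]; dsimp only
    by_cases hjn : j < n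
    · have hin : i < n := lt_of_le_of_lt hij hjn
      rw [dif_pos hjn, dif_pos hin]
      exact hvb_anti (by exact_mod_cast hij : (⟨i, hin⟩ : Fin n) ≤ ⟨j, hjn⟩)
    · rw [dif_neg hjn]
      split
      · exact hb _
      · exact le_rfl
  set φa : Fin n ≃ Fin n := Fin.revPerm.trans σa with hφa
  set φb : Fin n ≃ Fin n := Fin.revPerm.trans σb with hφb
  have hφa_app : ∀ i, φa i = σa i.rev := fun i => rfl
  have hφb_app : ∀ i, φb i = σb i.rev := fun i => rfl
  have hsum : ∀ k, k ≤ n → ∑ i ∈ Finset.range k, v i ≤ ∑ i ∈ Finset.range k, u i := by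
    intro k hk
    -- rewrite the v-side as a sum over an actual subset T of b
    set T : Finset (Fin n) := Finset.image (fun i : Fin k => φb (Fin.castLE hk i)) Finset.univ
      with hT
    have hinjb : Function.Injective (fun i : Fin k => φb (Fin.castLE hk i)) :=
      φb.injective.comp (Fin.castLE_injective hk)
    have hTcard : T.card = k := by
      rw [hT, Finset.card_image_of_injective _ hinjb, Finset.card_univ, Fintype.card_fin]
    have hvT : ∑ i ∈ Finset.range k, v i = ∑ j ∈ T, b j := by
      rw [hT, Finset.sum_image (fun x _ y _ h => hinjb h)]
      rw [Finset.sum_range]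
      apply Finset.sum_congr rfl
      intro i _
      have hin : (i : ℕ) < n := lt_of_lt_of_le i.isLt hk
      rw [hv]; dsimp only
      rw [dif_pos hin]
      rfl
    obtain ⟨S, hScard, hle⟩ := hmaj T
    set S' : Finset (Fin n) := Finset.image φa.symm S with hS'
    have hS'card : S'.card = k := by
      rw [hS', Finset.card_image_of_injective _ φa.symm.injective, hScard, hTcard]
    have hSsum : ∑ j ∈ S, a j = ∑ i ∈ S', ua i := by
      rw [hS', Finset.sum_image (fun x _ y _ h => φa.symm.injective h)]
      apply Finset.sum_congr rfl
      intro x _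
      rw [hua]; dsimp only
      rw [← hφa_app, Equiv.apply_symm_apply]
    have htop := subset_sum_le_top ua hua_anti S' hS'card hk
    have huT : ∑ i : Fin k, ua (Fin.castLE hk i) = ∑ i ∈ Finset.range k, u i := by
      rw [Finset.sum_range]
      apply Finset.sum_congr rfl
      intro i _
      have hin : (i : ℕ) < n := lt_of_lt_of_le i.isLt hk
      rw [hu]; dsimp only
      rw [dif_pos hin]
      rfl
    calc ∑ i ∈ Finset.range k, v i = ∑ j ∈ T, b j := hvT
      _ ≤ ∑ j ∈ S, a j := hle
      _ = ∑ i ∈ S', ua i := hSsum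
      _ ≤ ∑ i : Fin k, ua (Fin.castLE hk i) := htop
      _ = ∑ i ∈ Finset.range k, u i := huT
  have hcore := core n u v hu0 hv0 hvanti hsum c hc
  have hvfin : ∑ i ∈ Finset.range n, v i ^ c = ∑ i, b i ^ c := by
    rw [Finset.sum_range]
    rw [show (∑ i : Fin n, v (i : ℕ) ^ c) = ∑ i : Fin n, b (φb i) ^ c from
      Finset.sum_congr rfl (fun i _ => by
        rw [hv]; dsimp only; rw [dif_pos i.isLt]; rfl)]
    exact Equiv.sum_comp φb (fun j => b j ^ c)
  have hufin : ∑ i ∈ Finset.range n, u i ^ c = ∑ i, a i ^ c := by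
    rw [Finset.sum_range]
    rw [show (∑ i : Fin n, u (i : ℕ) ^ c) = ∑ i : Fin n, a (φa i) ^ c from
      Finset.sum_congr rfl (fun i _ => by
        rw [hu]; dsimp only; rw [dif_pos i.isLt]; rfl)]
    exact Equiv.sum_comp φa (fun j => a j ^ c)
  rw [← hvfin, ← hufin]
  exact hcore

lemma powsum {n : ℕ} (a b : Fin n → ℝ) (ha : ∀ i, 0 < a i) (hb : ∀ i, 0 < b i)
    (μ : ℕ) (hμ : 1 ≤ μ)
    (h1 : WeakMajorizes (fun i => a i ^ μ) (fun i => b i ^ μ))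
    (h2 : ∀ k : ℕ, 1 ≤ k → k ≤ μ - 1 → ∑ i, b i ^ k ≤ ∑ i, a i ^ k)
    (m : ℕ) (hm : 1 ≤ m) : ∑ i, b i ^ m ≤ ∑ i, a i ^ m := by
  by_cases hmμ : m < μ
  · exact h2 m hm (by omega)
  · push_neg at hmμ
    have hc : (1 : ℝ) ≤ (m : ℝ) / (μ : ℝ) := by
      rw [le_div_iff₀ (by exact_mod_cast hμ)]
      simpa using (by exact_mod_cast hmμ : (μ : ℝ) ≤ m)
    have key := maj_rpow (fun i => a i ^ μ) (fun i => b i ^ μ)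
      (fun i => pow_nonneg (ha i).le μ) (fun i => pow_nonneg (hb i).le μ) h1 ((m : ℝ) / (μ : ℝ)) hc
    have ha' : ∀ x : ℝ, 0 < x → (x ^ μ) ^ ((m : ℝ) / (μ : ℝ)) = x ^ m := by
      intro x hx
      rw [← Real.rpow_natCast x μ, ← Real.rpow_mul hx.le, ← Real.rpow_natCast x m]
      congr 1
      field_simp
    calc ∑ i, b i ^ m = ∑ i, (b i ^ μ) ^ ((m : ℝ) / (μ : ℝ)) :=
          Finset.sum_congr rfl (fun i _ => (ha' _ (hb i)).symm)
      _ ≤ ∑ i, (a i ^ μ) ^ ((m : ℝ) / (μ : ℝ)) := key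
      _ = ∑ i, a i ^ m := Finset.sum_congr rfl (fun i _ => ha' _ (ha i))

lemma exp_sum_le {n : ℕ} (a b : Fin n → ℝ)
    (hpow : ∀ m : ℕ, 1 ≤ m → ∑ i, b i ^ m ≤ ∑ i, a i ^ m) :
    ∑ i, Real.exp (b i) ≤ ∑ i, Real.exp (a i) := by
  have hexp : ∀ x : ℝ, Real.exp x = ∑' m : ℕ, x ^ m / (Nat.factorial m : ℝ) := by
    intro x
    rw [Real.exp_eq_exp_ℝ, NormedSpace.exp_eq_tsum_div]
  have hsummb : ∀ i : Fin n, Summable (fun m : ℕ => b i ^ m / (Nat.factorial m : ℝ)) :=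
    fun i => Real.summable_pow_div_factorial (b i)
  have hsumma : ∀ i : Fin n, Summable (fun m : ℕ => a i ^ m / (Nat.factorial m : ℝ)) :=
    fun i => Real.summable_pow_div_factorial (a i)
  calc ∑ i, Real.exp (b i) = ∑ i, ∑' m : ℕ, b i ^ m / (Nat.factorial m : ℝ) := by
        simp only [hexp]
    _ = ∑' m : ℕ, ∑ i, b i ^ m / (Nat.factorial m : ℝ) := (Summable.tsum_finsetSum (fun i _ => hsummb i)).symm
    _ ≤ ∑' m : ℕ, ∑ i, a i ^ m / (Nat.factorial m : ℝ) := by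
        apply Summable.tsum_le_tsum _ (summable_sum (fun i _ => hsummb i))
          (summable_sum (fun i _ => hsumma i))
        intro m
        rcases Nat.eq_zero_or_pos m with hm | hm
        · subst hm; simp
        · rw [← Finset.sum_div, ← Finset.sum_div]
          exact (div_le_div_iff_of_pos_right (by positivity : (0:ℝ) < (Nat.factorial m : ℝ))).mpr (hpow m hm)
    _ = ∑ i, ∑' m : ℕ, a i ^ m / (Nat.factorial m : ℝ) := Summable.tsum_finsetSum (fun i _ => hsumma i)
    _ = ∑ i, Real.exp (a i) := by simp only [hexp]


/-- Theorem 1. If `(p + δ)^μ ≻_w (z + δ)^μ` and the power sums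
of order `1, …, μ - 1` are ordered, then `∑ exp(pᵢ t) ≥ ∑ exp(zᵢ t)` for `t ≥ 0`. -/
theorem stmt_4 (n : ℕ) (hn : 1 ≤ n) (p z : Fin n → ℝ) (μ : ℕ) (hμ : 1 ≤ μ) (δ : ℝ)
    (hp : ∀ i, 0 < p i + δ) (hz : ∀ i, 0 < z i + δ)
    (h1 : WeakMajorizes (fun i => (p i + δ) ^ μ) (fun i => (z i + δ) ^ μ))
    (h2 : ∀ k : ℕ, 1 ≤ k → k ≤ μ - 1 → ∑ i, (z i + δ) ^ k ≤ ∑ i, (p i + δ) ^ k) :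
    ∀ t : ℝ, 0 ≤ t → ∑ i, Real.exp (z i * t) ≤ ∑ i, Real.exp (p i * t) := by
  intro t ht
  have key : ∀ m : ℕ, 1 ≤ m → ∑ i, (z i + δ) ^ m ≤ ∑ i, (p i + δ) ^ m :=
    powsum (fun i => p i + δ) (fun i => z i + δ) hp hz μ hμ h1 h2
  have hpow : ∀ m : ℕ, 1 ≤ m →
      ∑ i, ((z i + δ) * t) ^ m ≤ ∑ i, ((p i + δ) * t) ^ m := by
    intro m hm
    simp only [mul_pow, ← Finset.sum_mul]
    exact mul_le_mul_of_nonneg_right (key m hm) (pow_nonneg ht m)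
  have hE := exp_sum_le (fun i => (p i + δ) * t) (fun i => (z i + δ) * t) hpow
  have hz' : ∀ i : Fin n, Real.exp (z i * t) = Real.exp ((z i + δ) * t) * Real.exp (-(δ * t)) := by
    intro i
    rw [← Real.exp_add]
    congr 1
    ring
  have hp' : ∀ i : Fin n, Real.exp (p i * t) = Real.exp ((p i + δ) * t) * Real.exp (-(δ * t)) := by
    intro i
    rw [← Real.exp_add]
    congr 1
    ring
  calc ∑ i, Real.exp (z i * t)
      = (∑ i, Real.exp ((z i + δ) * t)) * Real.exp (-(δ * t)) := by
        rw [Finset.sum_mul]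
        exact Finset.sum_congr rfl (fun i _ => hz' i)
    _ ≤ (∑ i, Real.exp ((p i + δ) * t)) * Real.exp (-(δ * t)) :=
        mul_le_mul_of_nonneg_right hE (Real.exp_pos _).le
    _ = ∑ i, Real.exp (p i * t) := by
        rw [Finset.sum_mul]
        exact Finset.sum_congr rfl (fun i _ => (hp' i).symm)
end

section
/- Let p ∈ ℝⁿ, z ∈ ℝᵐ and δ ∈ ℝ. If for every natural number k ≥ 0 one has ∑_{i=1}^n (pᵢ + δ)^k ≥ ∑_{j=1}^m (zⱼ + δ)^k, then for every real t ≥ 0 one has ∑_{i=1}^n exp(pᵢ t) ≥ ∑_{j=1}^m exp(zⱼ t). -/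
/-! Expanding the exponentials into power series gives `∑ᵢ exp(aᵢ t) = ∑ₖ (∑ᵢ aᵢ^k) t^k / k!`, so for
`t ≥ 0` ordered power sums give termwise ordered series. For the shifted families `pᵢ + δ`, `zⱼ + δ`
this orders `exp(δt) ∑ exp(pᵢ t)` and `exp(δt) ∑ exp(zⱼ t)`, and `exp(δt) > 0` cancels. -/

open Finset Nat

lemma Real.hasSum_sum_pow_div_factorial {ι : Type*} [Fintype ι] (a : ι → ℝ) :
    HasSum (fun k : ℕ => (∑ i, a i ^ k) / k !) (∑ i, Real.exp (a i)) := by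
  simp_rw [sum_div, Real.exp_eq_exp_ℝ]
  exact hasSum_sum fun i _ => NormedSpace.expSeries_div_hasSum_exp (a i)

theorem Real.sum_exp_mul_le_of_sum_pow_le {ι κ : Type*} [Fintype ι] [Fintype κ]
    (a : ι → ℝ) (b : κ → ℝ) (h : ∀ k : ℕ, ∑ j, b j ^ k ≤ ∑ i, a i ^ k) {t : ℝ} (ht : 0 ≤ t) :
    ∑ j, Real.exp (b j * t) ≤ ∑ i, Real.exp (a i * t) := by
  refine hasSum_le (fun k => ?_) (hasSum_sum_pow_div_factorial (b · * t))
    (hasSum_sum_pow_div_factorial (a · * t))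
  simp_rw [mul_pow, ← sum_mul]
  gcongr
  exact h k

/-- key step in the proof of Theorem 1.
If all shifted power sums are ordered, `∑ (pᵢ + δ)^k ≥ ∑ (zⱼ + δ)^k` for every
`k ≥ 0`, then `∑ exp(pᵢ t) ≥ ∑ exp(zⱼ t)` for every `t ≥ 0`. -/
theorem stmt_5 (n m : ℕ) (p : Fin n → ℝ) (z : Fin m → ℝ) (δ : ℝ)
    (h : ∀ k : ℕ, ∑ j, (z j + δ) ^ k ≤ ∑ i, (p i + δ) ^ k) :
    ∀ t : ℝ, 0 ≤ t → ∑ j, Real.exp (z j * t) ≤ ∑ i, Real.exp (p i * t) := by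
  intro t ht
  have shifted := Real.sum_exp_mul_le_of_sum_pow_le (p · + δ) (z · + δ) h ht
  simp_rw [add_mul, Real.exp_add, ← sum_mul] at shifted
  exact le_of_mul_le_mul_right shifted (Real.exp_pos _)
end

section
/- Let n ≥ 1, p, z ∈ ℝⁿ, δ > -min over all components of p and z, and let μ₁ < μ₂ be positive integers. Suppose that the vector with components (pᵢ + δ)^{μ₁} weakly majorizes the vector with components (zᵢ + δ)^{μ₁}, and that ∑_{i=1}^n (pᵢ + δ)^k ≥ ∑_{i=1}^n (zᵢ + δ)^k for all integers k with 1 ≤ k ≤ μ₁ - 1. Then the vector with components (pᵢ + δ)^{μ₂} weakly majorizes the vector with components (zᵢ + δ)^{μ₂}, and ∑_{i=1}^n (pᵢ + δ)^k ≥ ∑_{i=1}^n (zᵢ + δ)^k for all integers k with 1 ≤ k ≤ μ₂ - 1. -/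
open Finset



/-- Tangent-line inequality for `rpow`. -/
lemma my_tangent {x y r : ℝ} (hx : 0 ≤ x) (hy : 0 < y) (hr : 1 ≤ r) :
    y ^ r + r * y ^ (r - 1) * (x - y) ≤ x ^ r := by
  have hs : (-1 : ℝ) ≤ x / y - 1 := by
    have : 0 ≤ x / y := div_nonneg hx hy.le
    linarith
  have hB := one_add_mul_self_le_rpow_one_add hs hr
  have h1 : (1 : ℝ) + (x / y - 1) = x / y := by ring
  rw [h1] at hB
  have hyr : (0 : ℝ) < y ^ r := Real.rpow_pos_of_pos hy r
  have hmul := mul_le_mul_of_nonneg_right hB hyr.le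
  have hdiv : (x / y) ^ r * y ^ r = x ^ r := by
    rw [← Real.mul_rpow (div_nonneg hx hy.le) hy.le, div_mul_cancel₀ _ hy.ne']
  rw [hdiv] at hmul
  refine le_trans (le_of_eq ?_) hmul
  have hsplit : y ^ r = y ^ (r - 1) * y := by
    rw [← Real.rpow_add_one hy.ne' (r - 1)]; ring_nf
  have : r * (x / y - 1) * y ^ r = r * y ^ (r - 1) * (x - y) := by
    rw [hsplit]
    field_simp
  linarith [this]

/-- Abel summation: coefficients antitone nonneg, prefix sums nonpositive. -/
lemma my_abel : ∀ (k : ℕ) (c d : ℕ → ℝ),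
    (∀ i j, i ≤ j → j < k → c j ≤ c i) → (∀ i, i < k → 0 ≤ c i) →
    (∀ j, j ≤ k → ∑ i ∈ range j, d i ≤ 0) →
    ∑ i ∈ range k, c i * d i ≤ 0 := by
  intro k
  induction k with
  | zero => intro c d _ _ _; simp
  | succ k ih =>
    intro c d hanti hpos hpre
    have hsplit : ∑ i ∈ range (k+1), c i * d i
        = (∑ i ∈ range k, (c i - c k) * d i) + c k * ∑ i ∈ range (k+1), d i := by
      have e1 : ∑ i ∈ range (k+1), c i * d i
          = (∑ i ∈ range (k+1), (c i - c k) * d i) + ∑ i ∈ range (k+1), c k * d i := by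
        rw [← Finset.sum_add_distrib]
        apply Finset.sum_congr rfl; intros; ring
      have e2 : ∑ i ∈ range (k+1), (c i - c k) * d i
          = ∑ i ∈ range k, (c i - c k) * d i := by
        rw [Finset.sum_range_succ]; simp
      rw [e1, e2, ← Finset.mul_sum]
    rw [hsplit]
    have h1 : ∑ i ∈ range k, (c i - c k) * d i ≤ 0 := by
      refine ih (fun i => c i - c k) d ?_ ?_ ?_
      · intro i j hij hj; have := hanti i j hij (hj.trans (Nat.lt_succ_self k)); linarith
      · intro i hi; have := hanti i k hi.le (Nat.lt_succ_self k); linarith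
      · intro j hj; exact hpre j (hj.trans (Nat.le_succ k))
    have h2 : c k * ∑ i ∈ range (k+1), d i ≤ 0 :=
      mul_nonpos_of_nonneg_of_nonpos (hpos k (Nat.lt_succ_self k)) (hpre (k+1) le_rfl)
    linarith

/-- Tomić's theorem over `ℕ`-indexed sequences. -/
lemma my_tomic (k : ℕ) (A B : ℕ → ℝ) (hA : ∀ i < k, 0 < A i) (hB : ∀ i < k, 0 < B i)
    (hBanti : ∀ i j, i ≤ j → j < k → B j ≤ B i)
    (hpre : ∀ j, j ≤ k → ∑ i ∈ range j, B i ≤ ∑ i ∈ range j, A i)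
    {r : ℝ} (hr : 1 ≤ r) :
    ∑ i ∈ range k, B i ^ r ≤ ∑ i ∈ range k, A i ^ r := by
  have key : ∑ i ∈ range k, (B i ^ r - A i ^ r)
      ≤ ∑ i ∈ range k, (r * B i ^ (r - 1)) * (B i - A i) := by
    apply Finset.sum_le_sum
    intro i hi
    rw [Finset.mem_range] at hi
    have := my_tangent (hA i hi).le (hB i hi) hr
    nlinarith [this]
  have habel : ∑ i ∈ range k, (r * B i ^ (r - 1)) * (B i - A i) ≤ 0 := by
    apply my_abel k (fun i => r * B i ^ (r - 1)) (fun i => B i - A i)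
    · intro i j hij hj
      have h1 : B j ≤ B i := hBanti i j hij hj
      have h2 : B j ^ (r-1) ≤ B i ^ (r-1) :=
        Real.rpow_le_rpow (hB j hj).le h1 (by linarith)
      nlinarith
    · intro i hi
      exact mul_nonneg (by linarith) (Real.rpow_nonneg (hB i hi).le _)
    · intro j hj
      have := hpre j hj
      rw [Finset.sum_sub_distrib]
      linarith
  have := Finset.sum_sub_distrib (s := range k) (f := fun i => B i ^ r) (g := fun i => A i ^ r)
  linarith [key, habel, this]

/-- Bridge: sum over the `Fin n` filter `val < j` equals a `range` sum of the
`dite`-extension. -/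
lemma my_bridge {n : ℕ} (f : Fin n → ℝ) (j : ℕ) (hj : j ≤ n) (default : ℝ) :
    ∑ i ∈ Finset.univ.filter (fun i : Fin n => i.val < j), f i
      = ∑ i ∈ range j, (if h : i < n then f ⟨i, h⟩ else default) := by
  rcases Nat.eq_zero_or_pos n with hn | hn
  · subst hn
    have : j = 0 := Nat.le_zero.mp hj
    subst this
    simp
  apply Finset.sum_nbij' (fun i => i.val) (fun i => ⟨i % n, Nat.mod_lt _ (by omega)⟩)
  · intro a ha
    simp only [Finset.mem_filter] at ha
    simpa using ha.2
  · intro a ha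
    simp only [Finset.mem_range] at ha
    simp only [Finset.mem_filter, Finset.mem_univ, true_and]
    have : a % n = a := Nat.mod_eq_of_lt (by omega)
    omega
  · intro a ha
    have := a.isLt
    ext
    simp only []
    exact Nat.mod_eq_of_lt this
  · intro a ha
    simp only [Finset.mem_range] at ha
    exact Nat.mod_eq_of_lt (by omega)
  · intro a ha
    simp only [Finset.mem_filter, Finset.mem_univ, true_and] at ha
    rw [dif_pos a.isLt]

lemma my_card_filter {n j : ℕ} (hjn : j ≤ n) :
    (Finset.univ.filter fun i : Fin n => i.val < j).card = j := by
  have hfilter : Finset.univ.filter (fun i : Fin n => i.val < j)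
      = Finset.attachFin (range j) (fun m hm => lt_of_lt_of_le (Finset.mem_range.mp hm) hjn) := by
    ext i
    simp [Finset.mem_attachFin]
  rw [hfilter, Finset.card_attachFin, Finset.card_range]

/-- Any `j`-subset sum of `a` is at most the sum of the `j` largest values of `a`,
where `σ` enumerates `a` in decreasing order. -/
lemma my_topj {n : ℕ} (a : Fin n → ℝ) (σ : Equiv.Perm (Fin n))
    (hσ : ∀ i j : Fin n, i ≤ j → a (σ j) ≤ a (σ i))
    (U : Finset (Fin n)) (j : ℕ) (hU : U.card = j) :
    ∑ i ∈ U, a i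
      ≤ ∑ i ∈ Finset.image σ (Finset.univ.filter fun i : Fin n => i.val < j), a i := by
  have hjn : j ≤ n := by
    rw [← hU]
    calc U.card ≤ (Finset.univ : Finset (Fin n)).card := Finset.card_le_card (Finset.subset_univ U)
    _ = n := by simp
  rcases Nat.eq_zero_or_pos j with hj0 | hj0
  · subst hj0
    have : U = ∅ := Finset.card_eq_zero.mp hU
    subst this
    simp
  set V := Finset.image σ (Finset.univ.filter fun i : Fin n => i.val < j) with hV
  have hVcard : V.card = j := by
    rw [hV, Finset.card_image_of_injective _ σ.injective, my_card_filter hjn]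
  have hmemV : ∀ x : Fin n, x ∈ V ↔ (σ.symm x).val < j := by
    intro x
    rw [hV, Finset.mem_image]
    constructor
    · rintro ⟨y, hy, rfl⟩
      simp only [Finset.mem_filter, Finset.mem_univ, true_and] at hy
      simpa using hy
    · intro hx
      exact ⟨σ.symm x, by simp [Finset.mem_filter, hx], by simp⟩
  have hcards : (U \ V).card = (V \ U).card := by
    have h1 := Finset.card_sdiff_add_card_inter U V
    have h2 := Finset.card_sdiff_add_card_inter V U
    rw [Finset.inter_comm] at h2
    omega
  set c := a (σ ⟨j - 1, by omega⟩) with hc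
  have hub : ∀ x ∈ U \ V, a x ≤ c := by
    intro x hx
    have hxV : x ∉ V := (Finset.mem_sdiff.mp hx).2
    have hs : ¬ ((σ.symm x).val < j) := fun hlt => hxV ((hmemV x).mpr hlt)
    have hle : (⟨j - 1, by omega⟩ : Fin n) ≤ σ.symm x := by
      rw [Fin.le_def]
      simp only []
      omega
    have := hσ _ _ hle
    simpa using this
  have hlb : ∀ y ∈ V \ U, c ≤ a y := by
    intro y hy
    have hyV : y ∈ V := (Finset.mem_sdiff.mp hy).1
    have hs : (σ.symm y).val < j := (hmemV y).mp hyV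
    have hle : σ.symm y ≤ (⟨j - 1, by omega⟩ : Fin n) := by
      rw [Fin.le_def]
      simp only []
      omega
    have := hσ _ _ hle
    simpa using this
  have e1 : ∑ i ∈ U ∩ V, a i + ∑ i ∈ U \ V, a i = ∑ i ∈ U, a i :=
    Finset.sum_inter_add_sum_sdiff U V a
  have e2 : ∑ i ∈ V ∩ U, a i + ∑ i ∈ V \ U, a i = ∑ i ∈ V, a i :=
    Finset.sum_inter_add_sum_sdiff V U a
  have hUVsum : ∑ i ∈ U \ V, a i ≤ ∑ i ∈ V \ U, a i := by
    calc ∑ i ∈ U \ V, a i ≤ (U \ V).card • c := Finset.sum_le_card_nsmul _ _ _ hub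
    _ = (V \ U).card • c := by rw [hcards]
    _ ≤ ∑ i ∈ V \ U, a i := Finset.card_nsmul_le_sum _ _ _ hlb
  have : U ∩ V = V ∩ U := Finset.inter_comm U V
  linarith [e1, e2, hUVsum, congrArg (fun s => ∑ i ∈ s, a i) this]

lemma my_sum_dite {k : ℕ} (f : Fin k → ℝ) (d : ℝ) :
    ∑ i ∈ range k, (if h : i < k then f ⟨i, h⟩ else d) = ∑ j : Fin k, f j := by
  rw [← Fin.sum_univ_eq_sum_range (fun i => if h : i < k then f ⟨i, h⟩ else d) k]
  apply Finset.sum_congr rfl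
  intro i _
  rw [dif_pos i.isLt]

/-- Weak majorization of positive vectors is preserved by `rpow` with exponent `≥ 1`. -/
lemma my_key {n : ℕ} {a b : Fin n → ℝ} (ha : ∀ i, 0 < a i) (hb : ∀ i, 0 < b i)
    {r : ℝ} (hr : 1 ≤ r) (h : WeakMajorizes a b) :
    WeakMajorizes (fun i => a i ^ r) (fun i => b i ^ r) := by
  intro T
  set k := T.card with hk
  have hkn : k ≤ n := by
    rw [hk]
    calc T.card ≤ (Finset.univ : Finset (Fin n)).card := Finset.card_le_card (Finset.subset_univ T)
    _ = n := by simp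
  -- sort `a` in decreasing order
  obtain ⟨σ, hσ⟩ : ∃ σ : Equiv.Perm (Fin n), ∀ i j : Fin n, i ≤ j → a (σ j) ≤ a (σ i) := by
    refine ⟨Tuple.sort (fun i => -a i), fun i j hij => ?_⟩
    have := Tuple.monotone_sort (fun i => -a i) hij
    simp only [Function.comp_apply] at this
    linarith
  -- enumerate `T` in decreasing order of `b`
  obtain ⟨e, einj, eT, ebanti⟩ :
      ∃ e : Fin k → Fin n, Function.Injective e ∧ (∀ j, e j ∈ T) ∧
        (∀ i j : Fin k, i ≤ j → b (e j) ≤ b (e i)) := by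
    set e₀ : Fin k → Fin n := fun j => (T.orderIsoOfFin hk.symm j : Fin n) with he₀
    have e₀inj : Function.Injective e₀ := by
      intro x y hxy
      exact (T.orderIsoOfFin hk.symm).injective (Subtype.ext hxy)
    set τ : Equiv.Perm (Fin k) := Tuple.sort (fun j => -(b (e₀ j))) with hτ
    refine ⟨fun j => e₀ (τ j), e₀inj.comp τ.injective, fun j => (T.orderIsoOfFin hk.symm (τ j)).2, ?_⟩
    intro i j hij
    have := Tuple.monotone_sort (fun j => -(b (e₀ j))) hij
    simp only [Function.comp_apply] at this
    linarith
  have eimg : Finset.image e Finset.univ = T := by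
    apply Finset.eq_of_subset_of_card_le
    · intro x hx
      rw [Finset.mem_image] at hx
      obtain ⟨j, _, rfl⟩ := hx
      exact eT j
    · rw [Finset.card_image_of_injective _ einj]
      simp [hk]
  -- ℕ-indexed sequences
  set A : ℕ → ℝ := fun i => if h : i < n then a (σ ⟨i, h⟩) else 1 with hA
  set B : ℕ → ℝ := fun i => if h : i < k then b (e ⟨i, h⟩) else 1 with hB
  -- the candidate set: indices of the `k` largest values of `a`
  refine ⟨Finset.image σ (Finset.univ.filter fun i : Fin n => i.val < k), ?_, ?_⟩
  · rw [Finset.card_image_of_injective _ σ.injective, my_card_filter hkn]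
  -- prefix-sum hypothesis
  have hpre : ∀ j, j ≤ k → ∑ i ∈ range j, B i ≤ ∑ i ∈ range j, A i := by
    intro j hj
    have hjn : j ≤ n := hj.trans hkn
    set U : Finset (Fin n) := Finset.image e (Finset.univ.filter fun i : Fin k => i.val < j) with hU
    have hUcard : U.card = j := by
      rw [hU, Finset.card_image_of_injective _ einj, my_card_filter hj]
    have hBsum : ∑ i ∈ range j, B i = ∑ i ∈ U, b i := by
      rw [hU, Finset.sum_image (fun x _ y _ hxy => einj hxy),
        my_bridge (fun i : Fin k => b (e i)) j hj 1]
    obtain ⟨S', hS'card, hle⟩ := h U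
    have htop := my_topj a σ hσ S' j (hS'card.trans hUcard)
    have hAsum : ∑ i ∈ Finset.image σ (Finset.univ.filter fun i : Fin n => i.val < j), a i
        = ∑ i ∈ range j, A i := by
      rw [Finset.sum_image (fun x _ y _ hxy => σ.injective hxy),
        my_bridge (fun i : Fin n => a (σ i)) j hjn 1]
    rw [hBsum]
    calc ∑ i ∈ U, b i ≤ ∑ i ∈ S', a i := hle
    _ ≤ _ := htop
    _ = ∑ i ∈ range j, A i := hAsum
  -- apply Tomić
  have htomic := my_tomic k A B
    (fun i hi => by simp only [hA]; rw [dif_pos (hi.trans_le hkn)]; exact ha _)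
    (fun i hi => by simp only [hB]; rw [dif_pos hi]; exact hb _)
    (fun i j hij hj => by
      simp only [hB]
      rw [dif_pos hj, dif_pos (lt_of_le_of_lt hij hj)]
      exact ebanti _ _ hij)
    hpre hr
  -- convert both sides
  have hleft : ∑ i ∈ range k, B i ^ r = ∑ i ∈ T, b i ^ r := by
    have : ∀ i ∈ range k, B i ^ r = (if h : i < k then b (e ⟨i, h⟩) ^ r else 1) := by
      intro i hi
      rw [Finset.mem_range] at hi
      simp only [hB]
      rw [dif_pos hi, dif_pos hi]
    rw [Finset.sum_congr rfl this, my_sum_dite (fun i : Fin k => b (e i) ^ r) 1,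
      ← eimg, Finset.sum_image (fun x _ y _ hxy => einj hxy)]
  have hright : ∑ i ∈ range k, A i ^ r
      = ∑ i ∈ Finset.image σ (Finset.univ.filter fun i : Fin n => i.val < k), a i ^ r := by
    have : ∀ i ∈ range k, A i ^ r = (if h : i < n then a (σ ⟨i, h⟩) ^ r else 1) := by
      intro i hi
      rw [Finset.mem_range] at hi
      simp only [hA]
      rw [dif_pos (hi.trans_le hkn), dif_pos (hi.trans_le hkn)]
    rw [Finset.sum_congr rfl this,
      Finset.sum_image (fun x _ y _ hxy => σ.injective hxy),
      my_bridge (fun i : Fin n => a (σ i) ^ r) k hkn 1]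
  calc ∑ i ∈ T, b i ^ r = ∑ i ∈ range k, B i ^ r := hleft.symm
  _ ≤ ∑ i ∈ range k, A i ^ r := htomic
  _ = _ := hright

lemma my_pow_eq {q : ℝ} (hq : 0 < q) {μ m : ℕ} (hμ : 1 ≤ μ) :
    ((q ^ μ : ℝ)) ^ ((m : ℝ) / (μ : ℝ)) = q ^ m := by
  have hμ0 : (μ : ℝ) ≠ 0 := by positivity
  rw [← Real.rpow_natCast q μ, ← Real.rpow_mul hq.le]
  rw [show (μ : ℝ) * ((m : ℝ) / (μ : ℝ)) = (m : ℝ) by field_simp]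
  exact Real.rpow_natCast q m

/-- Proposition 4. If the hypotheses of Theorem 1 hold with
`μ = μ₁`, then they also hold with any `μ = μ₂ > μ₁`. -/
theorem stmt_6 (n : ℕ) (hn : 1 ≤ n) (p z : Fin n → ℝ) (δ : ℝ)
    (hp : ∀ i, 0 < p i + δ) (hz : ∀ i, 0 < z i + δ)
    (μ₁ μ₂ : ℕ) (hμ₁ : 1 ≤ μ₁) (hμ₁₂ : μ₁ < μ₂)
    (h1 : WeakMajorizes (fun i => (p i + δ) ^ μ₁) (fun i => (z i + δ) ^ μ₁))
    (h2 : ∀ k : ℕ, 1 ≤ k → k ≤ μ₁ - 1 → ∑ i, (z i + δ) ^ k ≤ ∑ i, (p i + δ) ^ k) :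
    WeakMajorizes (fun i => (p i + δ) ^ μ₂) (fun i => (z i + δ) ^ μ₂) ∧
    ∀ k : ℕ, 1 ≤ k → k ≤ μ₂ - 1 → ∑ i, (z i + δ) ^ k ≤ ∑ i, (p i + δ) ^ k := by
  have hq : ∀ i, 0 < (p i + δ) ^ μ₁ := fun i => pow_pos (hp i) μ₁
  have hw : ∀ i, 0 < (z i + δ) ^ μ₁ := fun i => pow_pos (hz i) μ₁
  have hμ₁0 : (0 : ℝ) < (μ₁ : ℝ) := by exact_mod_cast hμ₁
  have main : ∀ m : ℕ, μ₁ ≤ m →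
      WeakMajorizes (fun i => (p i + δ) ^ m) (fun i => (z i + δ) ^ m) := by
    intro m hm
    have hr : 1 ≤ (m : ℝ) / (μ₁ : ℝ) := (one_le_div hμ₁0).mpr (by exact_mod_cast hm)
    have hkey := my_key hq hw hr h1
    have ep : (fun i => (((p i + δ) ^ μ₁ : ℝ)) ^ ((m : ℝ) / (μ₁ : ℝ)))
        = fun i => (p i + δ) ^ m := funext fun i => my_pow_eq (hp i) hμ₁
    have ez : (fun i => (((z i + δ) ^ μ₁ : ℝ)) ^ ((m : ℝ) / (μ₁ : ℝ)))
        = fun i => (z i + δ) ^ m := funext fun i => my_pow_eq (hz i) hμ₁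
    rwa [ep, ez] at hkey
  refine ⟨main μ₂ hμ₁₂.le, ?_⟩
  intro k hk1 hk2
  by_cases hkμ : k ≤ μ₁ - 1
  · exact h2 k hk1 hkμ
  · have hm : μ₁ ≤ k := by omega
    obtain ⟨S, hS, hle⟩ := main k hm Finset.univ
    have hSuniv : S = Finset.univ := Finset.eq_univ_of_card S (by simpa using hS)
    rw [hSuniv] at hle
    exact hle
end

section
/- Let B : ℝ → ℝ be given by B(s) = b₀ s² + b₁ s + b₂ for real coefficients b₀, b₁, b₂, and let p₁ > p₂ be real numbers. Then B(p₁)·exp(p₁ t) - B(p₂)·exp(p₂ t) ≥ 0 for all real t ≥ 0 if and only if B(p₁) ≥ 0 and B(p₁) ≥ B(p₂). -/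
/-- distinct-real-poles case of Proposition 6.
For `B(s) = b₀ s² + b₁ s + b₂` and `p₁ > p₂`,
`B(p₁)e^{p₁ t} - B(p₂)e^{p₂ t} ≥ 0` for all `t ≥ 0` iff `B(p₁) ≥ 0` and
`B(p₁) ≥ B(p₂)`. -/
theorem stmt_10 (b₀ b₁ b₂ : ℝ) (B : ℝ → ℝ)
    (hB : ∀ s, B s = b₀ * s ^ 2 + b₁ * s + b₂)
    (p₁ p₂ : ℝ) (hp : p₂ < p₁) :
    (∀ t : ℝ, 0 ≤ t → 0 ≤ B p₁ * Real.exp (p₁ * t) - B p₂ * Real.exp (p₂ * t)) ↔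
    (0 ≤ B p₁ ∧ B p₂ ≤ B p₁) := by
  set c := B p₁ with hc
  set d := B p₂ with hd
  have hpd : (0:ℝ) < p₁ - p₂ := by linarith
  constructor
  · intro h
    have h0 := h 0 le_rfl
    simp at h0
    refine ⟨?_, by linarith⟩
    by_contra hcneg
    push_neg at hcneg
    set t := (max 0 (Real.log (d / c)) + 1) / (p₁ - p₂) with ht
    have htpos : 0 ≤ t := by
      apply div_nonneg _ hpd.le
      have := le_max_left 0 (Real.log (d / c))
      linarith
    have hexp : d / c < Real.exp ((p₁ - p₂) * t) := by
      have h1 : (p₁ - p₂) * t = max 0 (Real.log (d / c)) + 1 := by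
        rw [ht, mul_div_assoc']; exact mul_div_cancel_left₀ _ hpd.ne'
      rw [h1]
      calc d / c ≤ Real.exp (Real.log (d / c)) := Real.le_exp_log _
        _ < Real.exp (max 0 (Real.log (d / c)) + 1) := by
            apply Real.exp_lt_exp.2
            have := le_max_right 0 (Real.log (d / c))
            linarith
    have hkey := h t htpos
    have hsplit : p₁ * t = (p₁ - p₂) * t + p₂ * t := by ring
    rw [hsplit, Real.exp_add] at hkey
    have hdc : c * Real.exp ((p₁ - p₂) * t) < d := by
      have := (div_lt_iff_of_neg hcneg).1 hexp
      linarith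
    have he2 : 0 < Real.exp (p₂ * t) := Real.exp_pos _
    nlinarith
  · rintro ⟨hc0, hdc⟩ t htpos
    have h1 : Real.exp (p₂ * t) ≤ Real.exp (p₁ * t) :=
      Real.exp_le_exp.2 (by nlinarith)
    have he2 : 0 < Real.exp (p₂ * t) := Real.exp_pos _
    nlinarith
end

section
/- Let k₁, k₂, p be real numbers. Then (k₁ + k₂ t)·exp(p t) ≥ 0 for all real t ≥ 0 if and only if k₁ ≥ 0 and k₂ ≥ 0. -/
/-- repeated-real-pole case of Proposition 6.
`(k₁ + k₂ t) e^{p t} ≥ 0` for all `t ≥ 0` iff `k₁ ≥ 0` and `k₂ ≥ 0`. -/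
theorem stmt_11 (k₁ k₂ p : ℝ) :
    (∀ t : ℝ, 0 ≤ t → 0 ≤ (k₁ + k₂ * t) * Real.exp (p * t)) ↔ (0 ≤ k₁ ∧ 0 ≤ k₂) := by
  constructor
  · intro h
    constructor
    · have := h 0 le_rfl
      simpa using this
    · by_contra hk
      push_neg at hk
      set t := (k₁ + 1) / (-k₂) with ht
      have htpos : 0 ≤ t := by
        apply div_nonneg
        · have h0 := h 0 le_rfl
          simp at h0
          linarith
        · linarith
      have := h t htpos
      have hk0 : k₂ ≠ 0 := ne_of_lt hk
      have hlin : k₁ + k₂ * t = -1 := by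
        rw [ht]; field_simp [hk0]
        ring
      rw [hlin] at this
      have := Real.exp_pos (p * t)
      nlinarith
  · rintro ⟨h1, h2⟩ t ht
    exact mul_nonneg (by nlinarith) (Real.exp_pos _).le
end

section
/- Let p₁, p₂, z₁, z₂ be real numbers. Then exp(p₁ t) + exp(p₂ t) ≥ exp(z₁ t) + exp(z₂ t) holds for all real t ≥ 0 if and only if max(p₁, p₂) ≥ max(z₁, z₂) and p₁ + p₂ ≥ z₁ + z₂ (that is, if and only if the vector (p₁, p₂) weakly majorizes the vector (z₁, z₂)). -/
/-- Two-point Karamata inequality for `exp`. -/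
lemma karamata2exp (a b A B : ℝ) (hBb : B ≤ b) (hba : b ≤ a) (haA : a ≤ A)
    (hsum : a + b = A + B) : Real.exp a + Real.exp b ≤ Real.exp A + Real.exp B := by
  have hA : Real.exp A = Real.exp a * Real.exp (A - a) := by
    rw [← Real.exp_add]; ring_nf
  have hb : Real.exp b = Real.exp B * Real.exp (A - a) := by
    rw [← Real.exp_add]; congr 1; linarith
  have h1 : (1 : ℝ) ≤ Real.exp (A - a) := by
    rw [← Real.exp_zero]; exact Real.exp_le_exp.2 (by linarith)
  have h2 : Real.exp B ≤ Real.exp a := Real.exp_le_exp.2 (by linarith)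
  nlinarith [Real.exp_pos B, Real.exp_pos a]

/-- second-order case: exponential-sum inequality is
equivalent to weak majorization of the zeros by the poles.
`e^{p₁ t} + e^{p₂ t} ≥ e^{z₁ t} + e^{z₂ t}` for all `t ≥ 0` iff
`max(p₁, p₂) ≥ max(z₁, z₂)` and `p₁ + p₂ ≥ z₁ + z₂`. -/
theorem stmt_12 (p₁ p₂ z₁ z₂ : ℝ) :
    (∀ t : ℝ, 0 ≤ t →
        Real.exp (z₁ * t) + Real.exp (z₂ * t) ≤ Real.exp (p₁ * t) + Real.exp (p₂ * t)) ↔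
    (max z₁ z₂ ≤ max p₁ p₂ ∧ z₁ + z₂ ≤ p₁ + p₂) := by
  constructor
  · intro h
    constructor
    · -- max condition
      by_contra hc
      push_neg at hc
      set Mp := max p₁ p₂ with hMp
      set Mz := max z₁ z₂ with hMz
      set t := Real.log 3 / (Mz - Mp) with ht
      have hd : 0 < Mz - Mp := by linarith
      have hlog : 0 < Real.log 3 := Real.log_pos (by norm_num)
      have ht0 : 0 ≤ t := le_of_lt (div_pos hlog hd)
      have hMzt : Mz * t = Mp * t + Real.log 3 := by
        field_simp [ht]
        rw [ht, div_eq_mul_inv]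
        have hinv : (Mz - Mp) * (Mz - Mp)⁻¹ = 1 := mul_inv_cancel₀ (ne_of_gt hd)
        linear_combination (Real.log 3) * hinv
      have hz : Real.exp (Mz * t) ≤ Real.exp (z₁ * t) + Real.exp (z₂ * t) := by
        rcases max_cases z₁ z₂ with ⟨he, _⟩ | ⟨he, _⟩ <;> rw [← hMz] at he <;>
          rw [he] <;> nlinarith [Real.exp_pos (z₁ * t), Real.exp_pos (z₂ * t)]
      have hp : Real.exp (p₁ * t) + Real.exp (p₂ * t) ≤ 2 * Real.exp (Mp * t) := by
        have h1 : Real.exp (p₁ * t) ≤ Real.exp (Mp * t) :=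
          Real.exp_le_exp.2 (mul_le_mul_of_nonneg_right (le_max_left _ _) ht0)
        have h2 : Real.exp (p₂ * t) ≤ Real.exp (Mp * t) :=
          Real.exp_le_exp.2 (mul_le_mul_of_nonneg_right (le_max_right _ _) ht0)
        linarith
      have key : Real.exp (Mz * t) ≤ 2 * Real.exp (Mp * t) :=
        le_trans hz (le_trans (h t ht0) hp)
      rw [hMzt, Real.exp_add, Real.exp_log (by norm_num)] at key
      nlinarith [Real.exp_pos (Mp * t)]
    · -- sum condition via derivative at 0
      set f : ℝ → ℝ := fun t =>
        Real.exp (p₁ * t) + Real.exp (p₂ * t) - Real.exp (z₁ * t) - Real.exp (z₂ * t) with hf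
      have hD : HasDerivAt f (p₁ + p₂ - z₁ - z₂) 0 := by
        have h1 : HasDerivAt (fun t : ℝ => Real.exp (p₁ * t)) p₁ 0 := by
          simpa using ((hasDerivAt_id (0:ℝ)).const_mul p₁).exp
        have h2 : HasDerivAt (fun t : ℝ => Real.exp (p₂ * t)) p₂ 0 := by
          simpa using ((hasDerivAt_id (0:ℝ)).const_mul p₂).exp
        have h3 : HasDerivAt (fun t : ℝ => Real.exp (z₁ * t)) z₁ 0 := by
          simpa using ((hasDerivAt_id (0:ℝ)).const_mul z₁).exp
        have h4 : HasDerivAt (fun t : ℝ => Real.exp (z₂ * t)) z₂ 0 := by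
          simpa using ((hasDerivAt_id (0:ℝ)).const_mul z₂).exp
        exact ((h1.add h2).sub h3).sub h4
      have hslope := hasDerivAt_iff_tendsto_slope.1 hD
      have hmono : (nhdsWithin (0:ℝ) (Set.Ioi 0)) ≤ nhdsWithin (0:ℝ) {(0:ℝ)}ᶜ :=
        nhdsWithin_mono 0 (fun x hx => ne_of_gt hx)
      have hT := hslope.mono_left hmono
      have hnn : ∀ᶠ t in nhdsWithin (0:ℝ) (Set.Ioi 0), 0 ≤ slope f 0 t := by
        filter_upwards [self_mem_nhdsWithin] with t ht
        have ht' : (0:ℝ) < t := ht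
        have hft : 0 ≤ f t := by
          have := h t (le_of_lt ht')
          simp only [hf]; linarith
        have hf0 : f 0 = 0 := by simp [hf]
        rw [slope_def_field]
        simp only [hf0, sub_zero]
        exact div_nonneg hft (le_of_lt ht')
      have : 0 ≤ p₁ + p₂ - z₁ - z₂ := ge_of_tendsto hT hnn
      linarith
  · rintro ⟨hmax, hsum⟩ t ht
    set Mz := max z₁ z₂ with hMz
    set mz := min z₁ z₂ with hmz
    set Mp := max p₁ p₂ with hMp
    have hsz : z₁ + z₂ = Mz + mz := (max_add_min z₁ z₂).symm
    -- step 1: Karamata with (Mz, mz) vs (Mp, z₁+z₂-Mp)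
    have step1 : Real.exp (z₁ * t) + Real.exp (z₂ * t)
        ≤ Real.exp (Mp * t) + Real.exp ((z₁ + z₂ - Mp) * t) := by
      have hzz : Real.exp (z₁ * t) + Real.exp (z₂ * t)
          = Real.exp (Mz * t) + Real.exp (mz * t) := by
        rcases le_total z₁ z₂ with hle | hle
        · rw [hMz, hmz, max_eq_right hle, min_eq_left hle]; ring
        · rw [hMz, hmz, max_eq_left hle, min_eq_right hle]
      rw [hzz]
      apply karamata2exp
      · -- (z₁+z₂-Mp)*t ≤ mz*t
        apply mul_le_mul_of_nonneg_right _ ht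
        have : Mz ≤ Mp := hmax
        linarith
      · exact mul_le_mul_of_nonneg_right (min_le_max) ht
      · exact mul_le_mul_of_nonneg_right hmax ht
      · linear_combination (-t) * hsz
    have step2 : Real.exp ((z₁ + z₂ - Mp) * t) ≤ Real.exp ((p₁ + p₂ - Mp) * t) :=
      Real.exp_le_exp.2 (mul_le_mul_of_nonneg_right (by linarith) ht)
    have step3 : Real.exp (Mp * t) + Real.exp ((p₁ + p₂ - Mp) * t)
        = Real.exp (p₁ * t) + Real.exp (p₂ * t) := by
      rcases max_cases p₁ p₂ with ⟨h1, _⟩ | ⟨h1, _⟩ <;> rw [← hMp] at * <;> rw [h1] <;>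
        ring_nf
    linarith
end

section
/- Fix an integer n ≥ 1, a real number δ, and an integer μ ≥ 1. The set S ⊆ ℝⁿ × ℝⁿ of pairs (π, z) such that (i) π₁ ≥ π₂ ≥ … ≥ πₙ > 0, (ii) zᵢ + δ > 0 for all i, (iii) for every k = 1,…,n, ∑_{i=1}^k πᵢ ≥ max over all k-element subsets T of {1,…,n} of ∑_{i∈T} (zᵢ + δ)^μ, and (iv) for every integer k with 1 ≤ k ≤ μ - 1, ∑_{i=1}^n πᵢ^{k/μ} ≥ ∑_{i=1}^n (zᵢ + δ)^k, is a convex subset of ℝⁿ × ℝⁿ. -/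
/-!
Every defining condition is an inequality `f ≤ g` with `f` convex and `g` concave on the
convex domain `{π > 0, z + δ > 0}`: the ordering of `π` and the right-hand sides of (iii) are
linear, the left-hand sides of (iii) and (iv) are sums of the convex powers `(zᵢ + δ) ^ m` of
nonnegative numbers, and the right-hand side of (iv) is a sum of the concave powers
`πᵢ ^ (k / μ)`, `k / μ ≤ 1`. A convex combination of two points then satisfies `f ≤ g` by
the chain `f (a x + b y) ≤ a f x + b f y ≤ a g x + b g y ≤ g (a x + b y)`.
-/

open Finset Set

section

variable {𝕜 E β ι : Type*} [Semiring 𝕜] [PartialOrder 𝕜] [AddCommMonoid E] [SMul 𝕜 E]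
  [AddCommMonoid β] [PartialOrder β] [IsOrderedAddMonoid β] {s : Set E}

theorem Convex.sep_forall_le [SMul 𝕜 β] [PosSMulMono 𝕜 β] {P : ι → Prop}
    {f g : ι → E → β} (hs : Convex 𝕜 s) (hf : ∀ j, P j → ConvexOn 𝕜 s (f j))
    (hg : ∀ j, P j → ConcaveOn 𝕜 s (g j)) :
    Convex 𝕜 {x ∈ s | ∀ j, P j → f j x ≤ g j x} := by
  rintro x ⟨hxs, hx⟩ y ⟨hys, hy⟩ a b ha hb hab
  refine ⟨hs hxs hys ha hb hab, fun j hj => ?_⟩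
  calc f j (a • x + b • y) ≤ a • f j x + b • f j y := (hf j hj).2 hxs hys ha hb hab
    _ ≤ a • g j x + b • g j y := by
      gcongr
      exacts [hx j hj, hy j hj]
    _ ≤ g j (a • x + b • y) := (hg j hj).2 hxs hys ha hb hab

variable [Module 𝕜 β]

theorem ConvexOn.finset_sum {t : Finset ι} {f : ι → E → β} (hs : Convex 𝕜 s)
    (hf : ∀ i ∈ t, ConvexOn 𝕜 s (f i)) : ConvexOn 𝕜 s fun x => ∑ i ∈ t, f i x := by
  classical
  induction t using Finset.induction_on with
  | empty => simpa using convexOn_const 0 hs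
  | insert i t hi ih =>
    simp_rw [Finset.sum_insert hi]
    exact (hf i (mem_insert_self i t)).add (ih fun j hj => hf j (mem_insert_of_mem hj))

theorem ConcaveOn.finset_sum {t : Finset ι} {f : ι → E → β} (hs : Convex 𝕜 s)
    (hf : ∀ i ∈ t, ConcaveOn 𝕜 s (f i)) : ConcaveOn 𝕜 s fun x => ∑ i ∈ t, f i x :=
  ConvexOn.finset_sum (β := βᵒᵈ) hs hf

end

section

variable {ι : Type*} {s : Set ((ι → ℝ) × (ι → ℝ))}

theorem concaveOn_rpow_fst_apply (hs : Convex ℝ s) {i : ι} (hs₀ : ∀ x ∈ s, 0 ≤ x.1 i)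
    {p : ℝ} (hp₀ : 0 ≤ p) (hp₁ : p ≤ 1) : ConcaveOn ℝ s fun x => x.1 i ^ p :=
  ((Real.concaveOn_rpow hp₀ hp₁).comp_linearMap
    (LinearMap.proj (R := ℝ) (φ := fun _ : ι => ℝ) i ∘ₗ .fst ℝ _ _)).subset hs₀ hs

theorem convexOn_pow_snd_apply_add (hs : Convex ℝ s) {i : ι} {δ : ℝ}
    (hs₀ : ∀ x ∈ s, 0 ≤ x.2 i + δ) (m : ℕ) : ConvexOn ℝ s fun x => (x.2 i + δ) ^ m :=
  (((convexOn_pow m).translate_left δ).comp_linearMap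
    (LinearMap.proj (R := ℝ) (φ := fun _ : ι => ℝ) i ∘ₗ .snd ℝ _ _)).subset
    (fun x hx => show 0 ≤ δ + x.2 i by linarith [hs₀ x hx]) hs

def pairOrthant (δ : ℝ) : Set ((ι → ℝ) × (ι → ℝ)) :=
  (Set.univ.pi fun _ => Ioi 0) ×ˢ (Set.univ.pi fun _ => Ioi (-δ))

theorem mem_pairOrthant {δ : ℝ} {x : (ι → ℝ) × (ι → ℝ)} :
    x ∈ pairOrthant δ ↔ (∀ i, 0 < x.1 i) ∧ ∀ i, 0 < x.2 i + δ := by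
  simp [pairOrthant, neg_lt_iff_pos_add]

theorem convex_pairOrthant (δ : ℝ) : Convex ℝ (pairOrthant (ι := ι) δ) :=
  (convex_pi fun _ _ => convex_Ioi 0).prod (convex_pi fun _ _ => convex_Ioi (-δ))

end

theorem stmt_14_general (n : ℕ) (δ : ℝ) (μ : ℕ) :
    Convex ℝ {pz : (Fin n → ℝ) × (Fin n → ℝ) |
      (∀ i j : Fin n, i ≤ j → pz.1 j ≤ pz.1 i) ∧
      (∀ i, 0 < pz.1 i) ∧
      (∀ i, 0 < pz.2 i + δ) ∧
      (∀ k : ℕ, 1 ≤ k → k ≤ n → ∀ T : Finset (Fin n), T.card = k →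
        ∑ i ∈ T, (pz.2 i + δ) ^ μ ≤
          ∑ i ∈ Finset.univ.filter (fun i : Fin n => (i : ℕ) < k), pz.1 i) ∧
      (∀ k : ℕ, 1 ≤ k → k ≤ μ - 1 →
        ∑ i, (pz.2 i + δ) ^ k ≤ ∑ i, pz.1 i ^ ((k : ℝ) / (μ : ℝ)))} := by
  have hK := convex_pairOrthant (ι := Fin n) δ
  have hKπ : ∀ x ∈ pairOrthant (ι := Fin n) δ, ∀ i, 0 ≤ x.1 i :=
    fun x hx i => ((mem_pairOrthant.1 hx).1 i).le
  have hKz : ∀ x ∈ pairOrthant (ι := Fin n) δ, ∀ i, 0 ≤ x.2 i + δ :=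
    fun x hx i => ((mem_pairOrthant.1 hx).2 i).le
  let coord (i : Fin n) : ((Fin n → ℝ) × (Fin n → ℝ)) →ₗ[ℝ] ℝ :=
    LinearMap.proj i ∘ₗ .fst ℝ _ _
  have hsorted := hK.sep_forall_le (P := fun ij : Fin n × Fin n => ij.1 ≤ ij.2)
    (f := fun ij => coord ij.2) (g := fun ij => coord ij.1)
    (fun ij _ => (coord ij.2).convexOn hK) (fun ij _ => (coord ij.1).concaveOn hK)
  have hmajor := hK.sep_forall_le
    (P := fun kT : ℕ × Finset (Fin n) => 1 ≤ kT.1 ∧ kT.1 ≤ n ∧ kT.2.card = kT.1)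
    (f := fun kT x => ∑ i ∈ kT.2, (x.2 i + δ) ^ μ)
    (g := fun kT x => ∑ i ∈ univ.filter (fun i : Fin n => (i : ℕ) < kT.1), coord i x)
    (fun kT _ => ConvexOn.finset_sum hK fun i _ =>
      convexOn_pow_snd_apply_add hK (hKz · · i) μ)
    (fun kT _ => ConcaveOn.finset_sum hK fun i _ => (coord i).concaveOn hK)
  have hpower := hK.sep_forall_le (P := fun k : ℕ => 1 ≤ k ∧ k ≤ μ - 1)
    (f := fun k x => ∑ i, (x.2 i + δ) ^ k)
    (g := fun k x => ∑ i, x.1 i ^ ((k : ℝ) / (μ : ℝ)))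
    (fun k _ => ConvexOn.finset_sum hK fun i _ => convexOn_pow_snd_apply_add hK (hKz · · i) k)
    (fun k hk => ConcaveOn.finset_sum hK fun i _ =>
      concaveOn_rpow_fst_apply hK (hKπ · · i) (by positivity)
        (div_le_one_of_le₀ (by exact_mod_cast hk.2.trans (Nat.sub_le μ 1)) (Nat.cast_nonneg μ)))
  convert (hsorted.inter hmajor).inter hpower using 1
  ext pz
  simp only [coord, mem_pairOrthant, mem_ofPred_eq, mem_inter_iff, LinearMap.coe_comp,
    LinearMap.coe_proj, LinearMap.coe_fst, Function.comp_apply, Function.eval, Prod.forall, and_imp]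
  aesop

/-- Proposition 8: convexity of the LCM conditions of
Theorem 1 after the change of variables `π = (p + δ)^{μ↓}`.
The set of pairs `(π, z)` with `π` sorted in descending order, `π > 0`,
`zᵢ + δ > 0`, the majorization constraints (iii) (stated via maxima over
`k`-element subsets) and the power-sum constraints (iv), is convex. -/
theorem stmt_14 (n : ℕ) (hn : 1 ≤ n) (δ : ℝ) (μ : ℕ) (hμ : 1 ≤ μ) :
    Convex ℝ {pz : (Fin n → ℝ) × (Fin n → ℝ) |
      (∀ i j : Fin n, i ≤ j → pz.1 j ≤ pz.1 i) ∧
      (∀ i, 0 < pz.1 i) ∧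
      (∀ i, 0 < pz.2 i + δ) ∧
      (∀ k : ℕ, 1 ≤ k → k ≤ n → ∀ T : Finset (Fin n), T.card = k →
        ∑ i ∈ T, (pz.2 i + δ) ^ μ ≤
          ∑ i ∈ Finset.univ.filter (fun i : Fin n => (i : ℕ) < k), pz.1 i) ∧
      (∀ k : ℕ, 1 ≤ k → k ≤ μ - 1 →
        ∑ i, (pz.2 i + δ) ^ k ≤ ∑ i, pz.1 i ^ ((k : ℝ) / (μ : ℝ)))} :=
  stmt_14_general n δ μ
end

section
/- Fix integers n, m ≥ 0 and μ ≥ 1, a real number δ, and fixed angles θ₁,…,θₙ and φ₁,…,φₘ satisfying |θᵢ| < π/2 and |φⱼ| < π/2 if μ = 1, and |θᵢ| < π/(2(μ-1)) and |φⱼ| < π/(2(μ-1)) if μ > 1. The set S ⊆ ℝ^{n+m} × ℝⁿ × ℝᵐ of triples (π, v, ζ) such that (i) π₁ ≥ π₂ ≥ … ≥ π_{n+m} ≥ 0, (ii) vᵢ ≥ 0 for all i = 1,…,n, (iii) ζⱼ > 0 for all j = 1,…,m, (iv) for every integer k with 1 ≤ k ≤ μ - 1, ∑_{i=1}^{n+m}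 πᵢ^{k/μ} + ∑_{i=1}^n vᵢ^{k/μ} cos(k θᵢ) ≥ ∑_{j=1}^m ζⱼ^k cos(k φⱼ), and (v) for every k = 1,…,n+m, ∑_{i=1}^k πᵢ ≥ max over all k-element subsets of the multiset {v₁,…,vₙ, ζ₁^μ,…,ζₘ^μ} of the sum of that subset, is a convex subset of ℝ^{n+m} × ℝⁿ × ℝᵐ. -/
lemma comb_pos {a b u v : ℝ} (ha : 0 ≤ a) (hb : 0 ≤ b) (hab : a + b = 1)
    (hu : 0 < u) (hv : 0 < v) : 0 < a * u + b * v := by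
  rcases ha.eq_or_lt with h | h
  · have hb1 : b = 1 := by linarith
    simp [← h, hb1, hv]
  · exact add_pos_of_pos_of_nonneg (mul_pos h hu) (mul_nonneg hb hv.le)

lemma pow_convex_comb {k : ℕ} {a b u v : ℝ} (hu : 0 ≤ u) (hv : 0 ≤ v)
    (ha : 0 ≤ a) (hb : 0 ≤ b) (hab : a + b = 1) :
    (a * u + b * v) ^ k ≤ a * u ^ k + b * v ^ k := by
  have := (convexOn_pow k).2 (Set.mem_Ici.mpr hu) (Set.mem_Ici.mpr hv) ha hb hab
  simpa [smul_eq_mul] using this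

lemma rpow_concave_comb {p a b u v : ℝ} (hp0 : 0 < p) (hp1 : p ≤ 1)
    (hu : 0 ≤ u) (hv : 0 ≤ v) (ha : 0 ≤ a) (hb : 0 ≤ b) (hab : a + b = 1) :
    a * u ^ p + b * v ^ p ≤ (a * u + b * v) ^ p := by
  rcases hp1.eq_or_lt with h | h
  · simp [h]
  · have := ((Real.strictConcaveOn_rpow hp0 h).concaveOn).2
      (Set.mem_Ici.mpr hu) (Set.mem_Ici.mpr hv) ha hb hab
    simpa [smul_eq_mul] using this

lemma cos_nonneg_of_angle {μ k : ℕ} (hμ : 1 ≤ μ) (hk1 : 1 ≤ k) (hk2 : k ≤ μ - 1)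
    {t : ℝ} (ht : |t| < if μ = 1 then Real.pi / 2 else Real.pi / (2 * ((μ : ℝ) - 1))) :
    0 ≤ Real.cos (k * t) := by
  have hμ2 : 2 ≤ μ := by omega
  have hμ1 : μ ≠ 1 := by omega
  rw [if_neg hμ1] at ht
  have hμr : (0:ℝ) < (μ:ℝ) - 1 := by
    have : (2:ℝ) ≤ (μ:ℝ) := by exact_mod_cast hμ2
    linarith
  have hk : (k:ℝ) ≤ (μ:ℝ) - 1 := by
    have : (k:ℝ) ≤ ((μ - 1 : ℕ):ℝ) := by exact_mod_cast hk2
    rwa [Nat.cast_sub hμ, Nat.cast_one] at this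
  have habs : |(k:ℝ) * t| ≤ Real.pi / 2 := by
    rw [abs_mul, abs_of_nonneg (by positivity : (0:ℝ) ≤ (k:ℝ))]
    calc (k:ℝ) * |t| ≤ ((μ:ℝ) - 1) * |t| :=
          mul_le_mul_of_nonneg_right hk (abs_nonneg _)
      _ ≤ ((μ:ℝ) - 1) * (Real.pi / (2 * ((μ:ℝ) - 1))) :=
          mul_le_mul_of_nonneg_left ht.le hμr.le
      _ = Real.pi / 2 := by field_simp
  exact Real.cos_nonneg_of_mem_Icc ⟨(abs_le.mp habs).1, (abs_le.mp habs).2⟩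

/-- (Proposition 9: convexity of the LCM conditions of
Corollary 1 after the change of variables `π = w↓`, `ζⱼ = v_{n+j}^{1/μ}`, for
fixed shift `δ` and fixed angles `θ`, `φ` of the shifted poles and zeros
restricted by `|θᵢ|, |φⱼ| < π/2` (if `μ = 1`) or `< π/(2(μ-1))` (if `μ > 1`)). -/
theorem stmt_15 (n m : ℕ) (μ : ℕ) (hμ : 1 ≤ μ) (δ : ℝ)
    (θ : Fin n → ℝ) (φ : Fin m → ℝ)
    (hθ : ∀ i, |θ i| <
      if μ = 1 then Real.pi / 2 else Real.pi / (2 * ((μ : ℝ) - 1)))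
    (hφ : ∀ j, |φ j| <
      if μ = 1 then Real.pi / 2 else Real.pi / (2 * ((μ : ℝ) - 1))) :
    Convex ℝ {x : (Fin (n + m) → ℝ) × (Fin n → ℝ) × (Fin m → ℝ) |
      (∀ i j : Fin (n + m), i ≤ j → x.1 j ≤ x.1 i) ∧
      (∀ i, 0 ≤ x.1 i) ∧
      (∀ i, 0 ≤ x.2.1 i) ∧
      (∀ j, 0 < x.2.2 j) ∧
      (∀ k : ℕ, 1 ≤ k → k ≤ μ - 1 →
        ∑ j, x.2.2 j ^ k * Real.cos (k * φ j) ≤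
          (∑ i, x.1 i ^ ((k : ℝ) / (μ : ℝ))) +
            ∑ i, x.2.1 i ^ ((k : ℝ) / (μ : ℝ)) * Real.cos (k * θ i)) ∧
      (∀ k : ℕ, 1 ≤ k → k ≤ n + m → ∀ T : Finset (Fin (n + m)), T.card = k →
        ∑ i ∈ T, Fin.append x.2.1 (fun j => x.2.2 j ^ μ) i ≤
          ∑ i ∈ Finset.univ.filter (fun i : Fin (n + m) => (i : ℕ) < k), x.1 i)} := by
  intro x hx y hy a b ha hb hab
  obtain ⟨hx1, hx2, hx3, hx4, hx5, hx6⟩ := hx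
  obtain ⟨hy1, hy2, hy3, hy4, hy5, hy6⟩ := hy
  simp only [Set.mem_setOf_eq, Prod.fst_add, Prod.snd_add, Prod.smul_fst, Prod.smul_snd,
    Pi.add_apply, Pi.smul_apply, smul_eq_mul]
  refine ⟨?_, ?_, ?_, ?_, ?_, ?_⟩
  · intro i j hij
    exact add_le_add (mul_le_mul_of_nonneg_left (hx1 i j hij) ha)
      (mul_le_mul_of_nonneg_left (hy1 i j hij) hb)
  · intro i
    exact add_nonneg (mul_nonneg ha (hx2 i)) (mul_nonneg hb (hy2 i))
  · intro i
    exact add_nonneg (mul_nonneg ha (hx3 i)) (mul_nonneg hb (hy3 i))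
  · intro j
    exact comb_pos ha hb hab (hx4 j) (hy4 j)
  · intro k hk1 hk2
    set p : ℝ := (k : ℝ) / (μ : ℝ) with hp
    have hμ2 : 2 ≤ μ := by omega
    have hμpos : (0:ℝ) < (μ:ℝ) := by positivity
    have hp0 : 0 < p := by
      apply div_pos _ hμpos
      exact_mod_cast hk1
    have hp1 : p ≤ 1 := by
      rw [hp, div_le_one hμpos]
      have : k ≤ μ := by omega
      exact_mod_cast this
    calc ∑ j, (a * x.2.2 j + b * y.2.2 j) ^ k * Real.cos (k * φ j)
        ≤ ∑ j, (a * x.2.2 j ^ k + b * y.2.2 j ^ k) * Real.cos (k * φ j) := by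
          refine Finset.sum_le_sum fun j _ => ?_
          exact mul_le_mul_of_nonneg_right
            (pow_convex_comb (hx4 j).le (hy4 j).le ha hb hab)
            (cos_nonneg_of_angle hμ hk1 hk2 (hφ j))
      _ = a * (∑ j, x.2.2 j ^ k * Real.cos (k * φ j)) +
          b * (∑ j, y.2.2 j ^ k * Real.cos (k * φ j)) := by
          rw [Finset.mul_sum, Finset.mul_sum, ← Finset.sum_add_distrib]
          congr 1; ext j; ring
      _ ≤ a * ((∑ i, x.1 i ^ p) + ∑ i, x.2.1 i ^ p * Real.cos (k * θ i)) +
          b * ((∑ i, y.1 i ^ p) + ∑ i, y.2.1 i ^ p * Real.cos (k * θ i)) :=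
          add_le_add (mul_le_mul_of_nonneg_left (hx5 k hk1 hk2) ha)
            (mul_le_mul_of_nonneg_left (hy5 k hk1 hk2) hb)
      _ = (∑ i, (a * x.1 i ^ p + b * y.1 i ^ p)) +
          ∑ i, (a * x.2.1 i ^ p + b * y.2.1 i ^ p) * Real.cos (k * θ i) := by
          simp only [mul_add, Finset.mul_sum, Finset.sum_add_distrib, add_mul, mul_assoc]
          ring
      _ ≤ (∑ i, (a * x.1 i + b * y.1 i) ^ p) +
          ∑ i, (a * x.2.1 i + b * y.2.1 i) ^ p * Real.cos (k * θ i) := by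
          refine add_le_add (Finset.sum_le_sum fun i _ =>
            rpow_concave_comb hp0 hp1 (hx2 i) (hy2 i) ha hb hab)
            (Finset.sum_le_sum fun i _ => ?_)
          exact mul_le_mul_of_nonneg_right
            (rpow_concave_comb hp0 hp1 (hx3 i) (hy3 i) ha hb hab)
            (cos_nonneg_of_angle hμ hk1 hk2 (hθ i))
  · intro k hk1 hk2 T hT
    have hpt : ∀ i ∈ T,
        Fin.append (a • x.2.1 + b • y.2.1)
          (fun j => (a • x.2.2 + b • y.2.2) j ^ μ) i ≤
        a * Fin.append x.2.1 (fun j => x.2.2 j ^ μ) i +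
        b * Fin.append y.2.1 (fun j => y.2.2 j ^ μ) i := by
      intro i _
      refine Fin.addCases (fun t => ?_) (fun j => ?_) i
      · simp only [Fin.append_left, Pi.add_apply, Pi.smul_apply, smul_eq_mul]
        exact le_rfl
      · simp only [Fin.append_right, Pi.add_apply, Pi.smul_apply, smul_eq_mul]
        exact pow_convex_comb (hx4 j).le (hy4 j).le ha hb hab
    calc ∑ i ∈ T, Fin.append (a • x.2.1 + b • y.2.1)
          (fun j => (a • x.2.2 + b • y.2.2) j ^ μ) i
        ≤ ∑ i ∈ T, (a * Fin.append x.2.1 (fun j => x.2.2 j ^ μ) i +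
            b * Fin.append y.2.1 (fun j => y.2.2 j ^ μ) i) :=
          Finset.sum_le_sum hpt
      _ = a * (∑ i ∈ T, Fin.append x.2.1 (fun j => x.2.2 j ^ μ) i) +
          b * (∑ i ∈ T, Fin.append y.2.1 (fun j => y.2.2 j ^ μ) i) := by
          rw [Finset.mul_sum, Finset.mul_sum, ← Finset.sum_add_distrib]
      _ ≤ a * (∑ i ∈ Finset.univ.filter (fun i : Fin (n + m) => (i : ℕ) < k), x.1 i) +
          b * (∑ i ∈ Finset.univ.filter (fun i : Fin (n + m) => (i : ℕ) < k), y.1 i) :=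
          add_le_add (mul_le_mul_of_nonneg_left (hx6 k hk1 hk2 T hT) ha)
            (mul_le_mul_of_nonneg_left (hy6 k hk1 hk2 T hT) hb)
      _ = ∑ i ∈ Finset.univ.filter (fun i : Fin (n + m) => (i : ℕ) < k),
            (a * x.1 i + b * y.1 i) := by
          rw [Finset.mul_sum, Finset.mul_sum, ← Finset.sum_add_distrib]
end
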